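/- arXiv:2502.10483 — 7 statements merged into one kernel-verified Lean document; each statement's English description precedes it below -/
import Mathlib

section
/- For every a > 0, b ≥ 0, c ≥ b + 1 and every complex number s with Re(s) > −b/a, the function t ↦ t^{s−1}·ϕ_{a,b,c}(t) is integrable on (0,∞) and ∫_0^∞ t^{s−1}·ϕ_{a,b,c}(t) dt = Γ(a·s + b)/Γ(a·s + c), where Γ is the complex Gamma function. -/
open MeasureTheory Set

/-- The elementary function
`ϕ_{a,b,c}(t) = t^{b/a} (1 − t^{1/a})^{c−b−1} / (a Γ(c−b))` for `0 < t < 1`,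
and `0` for `t ≥ 1`. -/
noncomputable def phi2Elem (a b c : ℝ) : ℝ → ℝ :=
  fun t => if t < 1 then
    (1 / (a * Real.Gamma (c - b))) * t ^ (b / a) * (1 - t ^ (1 / a)) ^ (c - b - 1)
  else 0

/-!
Substituting `t = x ^ a` turns `ϕ_{a,b,c}(t)` into `x ^ b (1 - x)₊ ^ (c - b - 1) / (a Γ(c - b))`.
Hence the Mellin transform of `ϕ_{a,b,c}` at `s` is `1 / Γ(c - b)` times the Mellin transform of
`(1 - x)₊ ^ (c - b - 1)` at `a s + b`, which is the Beta integral
`B(a s + b, c - b) = Γ(a s + b) Γ(c - b) / Γ(a s + c)`.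
-/

section HasMellin

variable {E : Type*} [NormedAddCommGroup E] [NormedSpace ℂ E] {f g : ℝ → E} {s : ℂ} {m : E}

theorem hasMellin_congr (h : EqOn f g (Ioi 0)) : HasMellin f s m ↔ HasMellin g s m := by
  have hfg : EqOn (fun t : ℝ => (t : ℂ) ^ (s - 1) • f t) (fun t => (t : ℂ) ^ (s - 1) • g t)
      (Ioi 0) := fun t ht => by simp only [h ht]
  rw [HasMellin, HasMellin, MellinConvergent, MellinConvergent, mellin, mellin,
    integrableOn_congr_fun hfg measurableSet_Ioi, setIntegral_congr_fun measurableSet_Ioi hfg]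

theorem HasMellin.comp_rpow {a : ℝ} (ha : a ≠ 0) (hf : HasMellin f (s / a) m) :
    HasMellin (fun t => f (t ^ a)) s (|a|⁻¹ • m) :=
  ⟨(MellinConvergent.comp_rpow ha).2 hf.1, by rw [mellin_comp_rpow, hf.2]⟩

theorem HasMellin.cpow_smul {a : ℂ} (hf : HasMellin f (s + a) m) :
    HasMellin (fun t => (t : ℂ) ^ a • f t) s m :=
  ⟨MellinConvergent.cpow_smul.2 hf.1, by rw [mellin_cpow_smul, hf.2]⟩

theorem HasMellin.const_smul (hf : HasMellin f s m) (c : ℂ) :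
    HasMellin (fun t => c • f t) s (c • m) := by
  simpa only [hf.2] using hasMellin_const_smul hf.1 c

end HasMellin

theorem hasMellin_indicator_Iio_one_sub_cpow {s v : ℂ} (hs : 0 < s.re) (hv : 0 < v.re) :
    HasMellin ((Iio 1).indicator fun t : ℝ => (1 - (t : ℂ)) ^ (v - 1)) s
      (Complex.Gamma s * Complex.Gamma v / Complex.Gamma (s + v)) := by
  have hGamma : Complex.Gamma s * Complex.Gamma v / Complex.Gamma (s + v)
      = Complex.betaIntegral s v := by
    rw [Complex.Gamma_mul_Gamma_eq_betaIntegral hs hv, mul_div_cancel_left₀]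
    exact Complex.Gamma_ne_zero_of_re_pos (by rw [Complex.add_re]; positivity)
  simp_rw [hGamma, HasMellin, MellinConvergent, mellin, ← indicator_smul, IntegrableOn,
    integrable_indicator_iff measurableSet_Iio, integral_indicator measurableSet_Iio,
    Measure.restrict_restrict measurableSet_Iio, Iio_inter_Ioi, smul_eq_mul]
  refine ⟨?_, ?_⟩
  · rw [IntegrableOn, Measure.restrict_restrict measurableSet_Iio, Iio_inter_Ioi]
    exact (intervalIntegrable_iff_integrableOn_Ioo_of_le zero_le_one).1
      (Complex.betaIntegral_convergent hs hv)
  · rw [Complex.betaIntegral, intervalIntegral.integral_of_le zero_le_one,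
      integral_Ioc_eq_integral_Ioo]

theorem ofReal_phi2Elem_eq {a b c t : ℝ} (ha : 0 < a) (ht : 0 < t) :
    (phi2Elem a b c t : ℂ) = ((a * Real.Gamma (c - b) : ℝ) : ℂ)⁻¹ •
      (((t ^ (1 / a) : ℝ) : ℂ) ^ (b : ℂ) •
        (Iio 1).indicator (fun x : ℝ => (1 - (x : ℂ)) ^ ((c : ℂ) - b - 1)) (t ^ (1 / a))) := by
  set x := t ^ (1 / a) with hx_def
  have hx : 0 < x := Real.rpow_pos_of_pos ht _
  have hpow : t ^ (b / a) = x ^ b := by rw [hx_def, ← Real.rpow_mul ht.le, one_div_mul_eq_div]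
  by_cases ht1 : t < 1
  · have hx1 : x < 1 := Real.rpow_lt_one ht.le ht1 (by positivity)
    rw [phi2Elem, if_pos ht1, indicator_of_mem (mem_Iio.2 hx1), hpow, ← hx_def]
    rw [Complex.ofReal_mul, Complex.ofReal_mul, Complex.ofReal_cpow hx.le,
      Complex.ofReal_cpow (sub_nonneg.2 hx1.le)]
    push_cast
    simp only [smul_eq_mul]
    ring
  · have hx1 : ¬ x < 1 := not_lt.2 (Real.one_le_rpow (not_lt.1 ht1) (by positivity))
    rw [phi2Elem, if_neg ht1, indicator_of_notMem (notMem_Iio.2 (not_lt.1 hx1))]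
    simp

theorem stmt_4_general (a b c : ℝ) (ha : 0 < a) (hc : b + 1 ≤ c) (s : ℂ)
    (hs : -(b / a) < s.re) :
    IntegrableOn (fun t : ℝ => (t : ℂ) ^ (s - 1) * (phi2Elem a b c t : ℂ))
      (Set.Ioi (0 : ℝ)) ∧
    ∫ t in Set.Ioi (0 : ℝ), (t : ℂ) ^ (s - 1) * (phi2Elem a b c t : ℂ)
      = Complex.Gamma (a * s + b) / Complex.Gamma (a * s + c) := by
  have hu : 0 < ((a : ℂ) * s + b).re := by
    have := (div_lt_iff₀' ha).1 (neg_div a b ▸ hs)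
    simp only [Complex.add_re, Complex.re_ofReal_mul, Complex.ofReal_re]
    linarith
  have hv : 0 < ((c : ℂ) - b).re := by simp only [Complex.sub_re, Complex.ofReal_re]; linarith
  have hscale : s / ((1 / a : ℝ) : ℂ) = a * s := by push_cast; field_simp
  have h := ((hasMellin_indicator_Iio_one_sub_cpow hu hv).cpow_smul (a := b)).const_smul
    ((a * Real.Gamma (c - b) : ℝ) : ℂ)⁻¹
  rw [← hscale] at h
  replace h := h.comp_rpow (one_div_ne_zero ha.ne')
  rw [← hasMellin_congr fun t ht => ofReal_phi2Elem_eq ha ht] at h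
  refine ⟨h.1, h.2.trans ?_⟩
  have hΓ : Complex.Gamma ((c : ℂ) - b) = Real.Gamma (c - b) := by
    rw [← Complex.Gamma_ofReal]; push_cast; rfl
  have hΓne : (Real.Gamma (c - b) : ℂ) ≠ 0 :=
    Complex.ofReal_ne_zero.2 (Real.Gamma_pos_of_pos (by linarith)).ne'
  have hane : (a : ℂ) ≠ 0 := Complex.ofReal_ne_zero.2 ha.ne'
  rw [hscale, hΓ, abs_of_pos (one_div_pos.2 ha),
    show (a : ℂ) * s + b + (c - b) = a * s + c by ring]
  simp only [Complex.real_smul, smul_eq_mul]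
  push_cast
  field_simp

theorem stmt_4 (a b c : ℝ) (ha : 0 < a) (hb : 0 ≤ b) (hc : b + 1 ≤ c) (s : ℂ)
    (hs : -(b / a) < s.re) :
    IntegrableOn (fun t : ℝ => (t : ℂ) ^ (s - 1) * (phi2Elem a b c t : ℂ))
      (Set.Ioi (0 : ℝ)) ∧
    ∫ t in Set.Ioi (0 : ℝ), (t : ℂ) ^ (s - 1) * (phi2Elem a b c t : ℂ)
      = Complex.Gamma (a * s + b) / Complex.Gamma (a * s + c) :=
  stmt_4_general a b c ha hc s hs
end

section
/- For every a > 0, b > 0, c ≥ b + 1 and every complex number s with Re(s) < b/a, the function t ↦ t^{s−1}·η_{a,b,c}(t) is integrable on (0,∞) and ∫_0^∞ t^{s−1}·η_{a,b,c}(t) dt = Γ(b − a·s)/Γ(c − a·s), where Γ is the complex Gamma function. -/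
open MeasureTheory Set

/-- The elementary function
`η_{a,b,c}(t) = t^{(1−c)/a} (t^{1/a} − 1)^{c−b−1} / (a Γ(c−b))` for `t > 1`,
and `0` for `0 < t ≤ 1`. -/
noncomputable def etaElem (a b c : ℝ) : ℝ → ℝ :=
  fun t => if 1 < t then
    (1 / (a * Real.Gamma (c - b))) * t ^ ((1 - c) / a) * (t ^ (1 / a) - 1) ^ (c - b - 1)
  else 0

theorem stmt_6 (a b c : ℝ) (ha : 0 < a) (hb : 0 < b) (hc : b + 1 ≤ c) (s : ℂ)
    (hs : s.re < b / a) :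
    IntegrableOn (fun t : ℝ => (t : ℂ) ^ (s - 1) * (etaElem a b c t : ℂ))
      (Set.Ioi (0 : ℝ)) ∧
    ∫ t in Set.Ioi (0 : ℝ), (t : ℂ) ^ (s - 1) * (etaElem a b c t : ℂ)
      = Complex.Gamma (b - a * s) / Complex.Gamma (c - a * s) := by
  have hcb : (0:ℝ) < c - b := by linarith
  have hGr : (0:ℝ) < Real.Gamma (c - b) := Real.Gamma_pos_of_pos hcb
  have haC : (a:ℂ) ≠ 0 := Complex.ofReal_ne_zero.mpr ha.ne'
  have hsa : s.re * a < b := (lt_div_iff₀ ha).mp hs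
  set C : ℝ := 1 / (a * Real.Gamma (c - b)) with hC
  set u : ℂ := (b : ℂ) - (a : ℂ) * s with hu
  have hure : 0 < u.re := by
    rw [hu]
    simp only [Complex.sub_re, Complex.ofReal_re, Complex.mul_re, Complex.ofReal_im, zero_mul,
      sub_zero]
    nlinarith
  set h : ℝ → ℂ := fun x => if x ∈ Set.Ioo (0:ℝ) 1 then (((1 - x) ^ (c - b - 1) : ℝ) : ℂ) else 0
    with hhdef
  set F : ℝ → ℂ := fun x : ℝ => (x:ℂ) ^ (u - 1) * (1 - (x:ℂ)) ^ (((c - b : ℝ):ℂ) - 1) with hF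
  have hind : (fun x : ℝ => (x:ℂ) ^ (u - 1) • h x) = Set.indicator (Set.Ioo (0:ℝ) 1) F := by
    funext x
    by_cases hx : x ∈ Set.Ioo (0:ℝ) 1
    · rw [Set.indicator_of_mem hx, hhdef, hF]
      simp only [if_pos hx, smul_eq_mul]
      congr 1
      rw [Complex.ofReal_cpow (by linarith [hx.2] : (0:ℝ) ≤ 1 - x)]
      push_cast
      ring_nf
    · rw [Set.indicator_of_notMem hx, hhdef]
      simp only [if_neg hx, smul_zero]
  have hvre : (0:ℝ) < (((c - b : ℝ):ℂ)).re := by simpa using hcb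
  have hbeta_int : IntervalIntegrable F volume 0 1 :=
    Complex.betaIntegral_convergent hure hvre
  have hMh : MellinConvergent h u := by
    have h1 : IntegrableOn F (Set.Ioo (0:ℝ) 1) :=
      (intervalIntegrable_iff_integrableOn_Ioo_of_le zero_le_one).mp hbeta_int
    have h2 : Integrable (Set.indicator (Set.Ioo (0:ℝ) 1) F) :=
      (integrable_indicator_iff measurableSet_Ioo).mpr h1
    rw [MellinConvergent, hind]
    exact h2.integrableOn
  have hmh : mellin h u = Complex.betaIntegral u ((c - b : ℝ) : ℂ) := by
    rw [mellin, hind, setIntegral_indicator measurableSet_Ioo,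
      (by rw [Set.inter_eq_right]; exact Set.Ioo_subset_Ioi_self :
        Set.Ioi (0:ℝ) ∩ Set.Ioo 0 1 = Set.Ioo 0 1),
      Complex.betaIntegral, intervalIntegral.integral_of_le zero_le_one,
      MeasureTheory.integral_Ioc_eq_integral_Ioo]
  set g : ℝ → ℂ := fun y => (C : ℂ) • ((y:ℂ) ^ (-(b:ℂ)) • h y⁻¹) with hg
  have key : ∀ w : ℂ, MellinConvergent (fun t : ℝ => h t⁻¹) w ↔ MellinConvergent h (-w) := by
    intro w
    have h1 := MellinConvergent.comp_rpow (f := h) (s := w) (a := (-1:ℝ)) (by norm_num)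
    simp only [Real.rpow_neg_one] at h1
    rw [h1]
    have e : w / (((-1:ℝ)):ℂ) = -w := by push_cast; ring
    rw [e]
  have hMg : MellinConvergent g ((a:ℂ) * s) := by
    have e : -((a:ℂ)*s + -(b:ℂ)) = u := by rw [hu]; ring
    have h1 : MellinConvergent (fun t : ℝ => h t⁻¹) ((a:ℂ)*s + -(b:ℂ)) := by
      rw [key, e]; exact hMh
    have h2 := MellinConvergent.cpow_smul.mpr h1
    exact h2.const_smul (C : ℂ)
  have hmg : mellin g ((a:ℂ)*s) = (C:ℂ) * Complex.betaIntegral u ((c-b:ℝ):ℂ) := by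
    rw [hg]
    rw [mellin_const_smul, mellin_cpow_smul, mellin_comp_inv]
    have e : -((a:ℂ)*s + -(b:ℂ)) = u := by rw [hu]; ring
    rw [e, hmh, smul_eq_mul]
  have hgeta : ∀ t : ℝ, t ∈ Set.Ioi (0:ℝ) → g (t ^ (1/a)) = ((etaElem a b c t : ℝ) : ℂ) := by
    intro t ht
    have ht' : (0:ℝ) < t := ht
    set y := t ^ (1/a) with hy
    have hy0 : 0 < y := Real.rpow_pos_of_pos ht' _
    by_cases h1 : 1 < t
    · have hy1 : 1 < y :=
        (Real.one_lt_rpow_iff_of_pos ht').mpr (Or.inl ⟨h1, by positivity⟩)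
      have hyinv : y⁻¹ ∈ Set.Ioo (0:ℝ) 1 := ⟨by positivity, by
        rw [inv_lt_one_iff₀]; right; exact hy1⟩
      rw [hg, hhdef]
      simp only [if_pos hyinv, etaElem, if_pos h1, smul_eq_mul]
      have hcy : ((y:ℂ)) ^ (-(b:ℂ)) = ((y ^ (-b) : ℝ) : ℂ) := by
        rw [Complex.ofReal_cpow hy0.le]; push_cast; rfl
      rw [hcy, ← Complex.ofReal_mul, ← Complex.ofReal_mul]
      congr 1
      have e1 : 1 - y⁻¹ = (y - 1) * y⁻¹ := by field_simp
      rw [e1, Real.mul_rpow (by linarith) (by positivity),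
        Real.inv_rpow hy0.le, ← Real.rpow_neg hy0.le]
      have e2 : y ^ (-b) * ((y-1) ^ (c-b-1) * y ^ (-(c-b-1)))
          = (y ^ (-b) * y ^ (-(c-b-1))) * (y-1) ^ (c-b-1) := by ring
      rw [e2, ← Real.rpow_add hy0]
      have e3 : -b + -(c-b-1) = (1-c) := by ring
      rw [e3, hy, ← Real.rpow_mul ht'.le]
      have e4 : 1/a * (1-c) = (1-c)/a := by ring
      rw [e4]
      ring
    · have ht1 : t ≤ 1 := le_of_not_gt h1
      have hyle : y ≤ 1 := Real.rpow_le_one ht'.le ht1 (by positivity)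
      have h1y : 1 ≤ y⁻¹ := by
        have hyy : y * y⁻¹ = 1 := mul_inv_cancel₀ hy0.ne'
        nlinarith [inv_pos.mpr hy0]
      have hnm : y⁻¹ ∉ Set.Ioo (0:ℝ) 1 := fun hmem => absurd hmem.2 (not_lt.mpr h1y)
      rw [hg, hhdef]
      simp [hnm, etaElem, h1]
  have hdiv : s / ((1/a : ℝ) : ℂ) = (a:ℂ) * s := by
    push_cast
    field_simp
  have hMeta0 : MellinConvergent (fun t : ℝ => g (t ^ (1/a))) s := by
    rw [MellinConvergent.comp_rpow (one_div_ne_zero ha.ne'), hdiv]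
    exact hMg
  have hMeta : IntegrableOn (fun t : ℝ => (t:ℂ)^(s-1) • ((etaElem a b c t : ℝ):ℂ))
      (Set.Ioi (0:ℝ)) :=
    IntegrableOn.congr_fun hMeta0 (fun t ht => by simp only [hgeta t ht]) measurableSet_Ioi
  constructor
  · simpa only [smul_eq_mul] using hMeta
  · have hval : ∫ t in Set.Ioi (0:ℝ), (t:ℂ)^(s-1) * (etaElem a b c t : ℂ)
        = mellin (fun t : ℝ => g (t ^ (1/a))) s := by
      rw [mellin]
      refine setIntegral_congr_fun measurableSet_Ioi (fun t ht => ?_)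
      rw [smul_eq_mul, hgeta t ht]
    rw [hval, mellin_comp_rpow, hdiv, hmg]
    have hGr' : ((Real.Gamma (c - b) : ℝ) : ℂ) ≠ 0 := Complex.ofReal_ne_zero.mpr hGr.ne'
    have hbeta := Complex.Gamma_mul_Gamma_eq_betaIntegral hure hvre
    have huv : u + ((c - b : ℝ):ℂ) = (c:ℂ) - (a:ℂ) * s := by rw [hu]; push_cast; ring
    rw [huv] at hbeta
    have hGw : Complex.Gamma ((c:ℂ) - (a:ℂ)*s) ≠ 0 := by
      apply Complex.Gamma_ne_zero_of_re_pos
      simp only [Complex.sub_re, Complex.ofReal_re, Complex.mul_re, Complex.ofReal_im, zero_mul,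
        sub_zero]
      nlinarith
    have hbeta' : Complex.betaIntegral u ((c-b:ℝ):ℂ)
        = Complex.Gamma u * Complex.Gamma ((c-b:ℝ):ℂ) / Complex.Gamma ((c:ℂ) - (a:ℂ)*s) := by
      rw [eq_div_iff hGw, mul_comm]
      exact hbeta.symm
    rw [hbeta', Complex.Gamma_ofReal, abs_of_pos (by positivity : (0:ℝ) < 1/a),
      one_div, inv_inv, Complex.real_smul, hC]
    push_cast
    field_simp
end

section
/- Let n₁, n₂, n₃, n₄ ∈ ℕ with (n₁,n₂,n₃,n₄) ≠ (0,0,0,0), and let f : (0,∞) → ℝ be the iterated Mellin convolution f = φ_{a₁,b₁} ⋁ ⋯ ⋁ φ_{a_{n₁},b_{n₁}} ⋁ ϕ_{a'₁,c₁,d₁} ⋁ ⋯ ⋁ ϕ_{a'_{n₂},c_{n₂},d_{n₂}} ⋁ ψ_{a''₁,o₁,r₁} ⋁ ⋯ ⋁ ψ_{a''_{n₃},o_{n₃},r_{n₃}} ⋁ η_{a'''₁,v₁,w₁} ⋁ ⋯ ⋁ η_{a'''_{n₄},v_{n₄},w_{n₄}} (empty groups of factors are omitted), where the parameters satisfy a_j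 > 0, b_j ≥ 0 for j = 1,…,n₁; a'_j > 0, c_j ≥ 0, d_j ≥ c_j + 1 for j = 1,…,n₂; a''_j > 0, r_j > 0, o_j ≥ 0 for j = 1,…,n₃; a'''_j > 0, v_j > 0, w_j ≥ v_j + 1 for j = 1,…,n₄. If it is not the case that (n₁ = n₃ = n₄ = 0 and n₂ ≥ 1), and not the case that (n₁ = n₂ = n₃ = 0 and n₄ ≥ 1), then f(t) > 0 for every t > 0. -/
open MeasureTheory Set

/-- `φ_{a,b}(t) = (1/a) t^{b/a} exp(−t^{1/a})`. -/
noncomputable def phiElem (a b : ℝ) : ℝ → ℝ :=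
  fun t => (1 / a) * t ^ (b / a) * Real.exp (-(t ^ (1 / a)))

/-- `ψ_{a,b,c}(t) = (Γ(b+c)/a) t^{b/a} (1 + t^{1/a})^{−b−c}`. -/
noncomputable def psiElem (a b c : ℝ) : ℝ → ℝ :=
  fun t => (Real.Gamma (b + c) / a) * t ^ (b / a) * (1 + t ^ (1 / a)) ^ (-b - c)

/-- Mellin convolution of two functions on `(0, ∞)`. -/
noncomputable def mellinConv (g₁ g₂ : ℝ → ℝ) : ℝ → ℝ :=
  fun t => ∫ τ in Set.Ioi (0 : ℝ), g₁ (t / τ) * g₂ τ / τ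

/-- Iterated Mellin convolution of a (nonempty) list of functions, obtained by
folding the binary Mellin convolution; the value on the empty list is junk. -/
noncomputable def mellinConvList : List (ℝ → ℝ) → ℝ → ℝ
  | [] => fun _ => 0
  | g :: gs => gs.foldl mellinConv g

/-!
Every factor `g` is measurable and nonnegative on `(0, ∞)`, bounded there by `C x^{-ε}` for all
small `ε > 0`, and positive on one of `(0, 1)` (for `ϕ`), `(1, ∞)` (for `η`) or `(0, ∞)`
(for `φ`, `ψ`): its `Kind`. These properties pass to Mellin convolutions. For the bound at `ε`,
split the integral at `τ = 1` and bound `g₂` with an exponent below `ε` on `(0, 1]` and above `ε`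
on `(1, ∞)`: the kernel is then dominated by integrable powers of `τ`. Positivity holds on the
product of the two positivity sets, because for such `t` the integrand is positive on an open set
of `τ`. Products of these sets reach all of `(0, ∞)` as soon as one factor is positive on `(0, ∞)`,
or factors positive on `(0, 1)` and on `(1, ∞)` both occur; the hypotheses exclude every other
case.
-/

namespace MellinPositivity

inductive Kind
  | low
  | high
  | full

namespace Kind

def set : Kind → Set ℝ
  | low => Ioo 0 1
  | high => Ioi 1
  | full => Ioi 0

def mul : Kind → Kind → Kind
  | low, low => low
  | high, high => high
  | _, _ => full

def lo : Kind → Bool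
  | high => false
  | _ => true

def hi : Kind → Bool
  | low => false
  | _ => true

theorem eq_full_of_lo_of_hi {k : Kind} (hlo : k.lo) (hhi : k.hi) : k = full := by
  cases k <;> simp_all [lo, hi]

theorem mul_lo (k k' : Kind) : (k.mul k').lo = (k.lo || k'.lo) := by
  cases k <;> cases k' <;> rfl

theorem mul_hi (k k' : Kind) : (k.mul k').hi = (k.hi || k'.hi) := by
  cases k <;> cases k' <;> rfl

theorem foldl_mul_lo (L : List Kind) (k : Kind) : (L.foldl mul k).lo = (k :: L).any lo := by
  induction L generalizing k with
  | nil => simp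
  | cons k' L ih => simp [ih, mul_lo, Bool.or_assoc]

theorem foldl_mul_hi (L : List Kind) (k : Kind) : (L.foldl mul k).hi = (k :: L).any hi := by
  induction L generalizing k with
  | nil => simp
  | cons k' L ih => simp [ih, mul_hi, Bool.or_assoc]

theorem foldl_mul_eq_full {L : List Kind} {k : Kind}
    (h : full ∈ k :: L ∨ (low ∈ k :: L ∧ high ∈ k :: L)) : L.foldl mul k = full := by
  apply eq_full_of_lo_of_hi
  · rw [foldl_mul_lo, List.any_eq_true]
    rcases h with h | ⟨h, -⟩
    exacts [⟨full, h, rfl⟩, ⟨low, h, rfl⟩]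
  · rw [foldl_mul_hi, List.any_eq_true]
    rcases h with h | ⟨-, h⟩
    exacts [⟨full, h, rfl⟩, ⟨high, h, rfl⟩]

theorem isOpen_set (k : Kind) : IsOpen k.set := by
  cases k
  exacts [isOpen_Ioo, isOpen_Ioi, isOpen_Ioi]

theorem set_subset_Ioi_zero (k : Kind) : k.set ⊆ Ioi 0 := by
  cases k
  exacts [Ioo_subset_Ioi_self, Ioi_subset_Ioi zero_le_one, subset_rfl]

theorem nonempty_set (k : Kind) : k.set.Nonempty := by
  cases k
  exacts [⟨1 / 2, by norm_num [set]⟩, ⟨2, by norm_num [set]⟩, ⟨1, by norm_num [set]⟩]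

open Pointwise in
theorem set_mul_subset (k₁ k₂ : Kind) : (k₁.mul k₂).set ⊆ k₁.set * k₂.set := by
  intro t ht
  have ht0 : 0 < t := set_subset_Ioi_zero _ ht
  have hsqrt : √t * √t = t := Real.mul_self_sqrt ht0.le
  have hsplit : t / (t + 1) * (t + 1) = t := div_mul_cancel₀ t (by positivity)
  have hsplit_lt : t / (t + 1) < 1 := (div_lt_one (by positivity)).2 (by linarith)
  obtain ⟨x, hx⟩ := k₁.nonempty_set
  obtain ⟨y, hy⟩ := k₂.nonempty_set
  have hx0 : 0 < x := k₁.set_subset_Ioi_zero hx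
  have hy0 : 0 < y := k₂.set_subset_Ioi_zero hy
  cases k₁ <;> cases k₂ <;> simp only [mul, set, mem_Ioo, mem_Ioi] at ht hx hy
  · have hlt : √t < 1 := (Real.sqrt_lt' one_pos).2 (by linarith)
    exact ⟨√t, ⟨by positivity, hlt⟩, √t, ⟨by positivity, hlt⟩, hsqrt⟩
  · exact ⟨t / (t + 1), ⟨by positivity, hsplit_lt⟩, t + 1, mem_Ioi.2 (by linarith), hsplit⟩
  · exact ⟨x, hx, t / x, div_pos ht0 hx0, mul_div_cancel₀ t hx0.ne'⟩
  · exact ⟨t + 1, mem_Ioi.2 (by linarith), t / (t + 1), ⟨by positivity, hsplit_lt⟩,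
      by simpa only [mul_comm] using hsplit⟩
  · have hgt : 1 < √t := (Real.lt_sqrt zero_le_one).2 (by linarith)
    exact ⟨√t, hgt, √t, hgt, hsqrt⟩
  · exact ⟨x, hx, t / x, div_pos ht0 hx0, mul_div_cancel₀ t hx0.ne'⟩
  all_goals exact ⟨t / y, div_pos ht0 hy0, y, hy, div_mul_cancel₀ t hy0.ne'⟩

end Kind

theorem integrableOn_and_setIntegral_le_of_le {X : Type*} [MeasurableSpace X] {μ : Measure X}
    {F D : X → ℝ} {S : Set X} (hS : MeasurableSet S) (hF : Measurable F)
    (hD : IntegrableOn D S μ) (hF₀ : ∀ x ∈ S, 0 ≤ F x) (hFD : ∀ x ∈ S, F x ≤ D x) :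
    IntegrableOn F S μ ∧ ∫ x in S, F x ∂μ ≤ ∫ x in S, D x ∂μ := by
  have hFi : IntegrableOn F S μ :=
    hD.mono' hF.aestronglyMeasurable <| (ae_restrict_iff' hS).2 <| ae_of_all _ fun x hx => by
      rw [Real.norm_of_nonneg (hF₀ x hx)]
      exact hFD x hx
  exact ⟨hFi, setIntegral_mono_on hFi hD hS hFD⟩

theorem setIntegral_pos_of_pos_on_isOpen {X : Type*} [TopologicalSpace X] [MeasurableSpace X]
    {μ : Measure X} [μ.IsOpenPosMeasure] {F : X → ℝ} {S U : Set X} (hS : MeasurableSet S)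
    (hF : IntegrableOn F S μ) (hF₀ : ∀ x ∈ S, 0 ≤ F x) (hU : IsOpen U) (hUne : U.Nonempty)
    (hUS : U ⊆ S) (hpos : ∀ x ∈ U, 0 < F x) : 0 < ∫ x in S, F x ∂μ := by
  refine (setIntegral_pos_iff_support_of_nonneg_ae
    ((ae_restrict_iff' hS).2 (ae_of_all _ hF₀)) hF).2 ?_
  exact (hU.measure_pos μ hUne).trans_le
    (measure_mono fun x hx => ⟨(hpos x hx).ne', hUS hx⟩)

theorem integral_Ioc_zero_one_rpow {s : ℝ} (hs : -1 < s) :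
    ∫ τ in Ioc 0 1, τ ^ s = 1 / (s + 1) := by
  rw [← intervalIntegral.integral_of_le zero_le_one, integral_rpow (Or.inl hs),
    Real.one_rpow, Real.zero_rpow (by linarith), sub_zero]

theorem integral_Ioi_one_rpow {s : ℝ} (hs : s < -1) :
    ∫ τ in Ioi 1, τ ^ s = -1 / (s + 1) := by
  rw [integral_Ioi_rpow_of_lt hs one_pos, Real.one_rpow]

variable {g₁ g₂ : ℝ → ℝ}

theorem mellinKernel_le {C₁ C₂ e₁ e₂ t τ : ℝ} (ht : 0 < t) (hτ : 0 < τ)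
    (hg₁ : 0 ≤ g₁ (t / τ)) (hg₂ : 0 ≤ g₂ τ) (h₁ : g₁ (t / τ) ≤ C₁ * (t / τ) ^ (-e₁))
    (h₂ : g₂ τ ≤ C₂ * τ ^ (-e₂)) :
    g₁ (t / τ) * g₂ τ / τ ≤ C₁ * C₂ * t ^ (-e₁) * τ ^ (e₁ - e₂ - 1) := by
  calc g₁ (t / τ) * g₂ τ / τ ≤ C₁ * (t / τ) ^ (-e₁) * (C₂ * τ ^ (-e₂)) / τ := by
        gcongr
        exact hg₁.trans h₁
    _ = C₁ * C₂ * t ^ (-e₁) * τ ^ (e₁ - e₂ - 1) := by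
        rw [Real.div_rpow ht.le hτ.le, Real.rpow_sub hτ, Real.rpow_sub hτ, Real.rpow_one,
          Real.rpow_neg hτ.le e₁, Real.rpow_neg hτ.le e₂]
        have : 0 < τ ^ e₁ := by positivity
        have : 0 < τ ^ e₂ := by positivity
        field_simp

theorem measurable_mellinConv (m₁ : Measurable g₁) (m₂ : Measurable g₂) :
    Measurable (mellinConv g₁ g₂) :=
  ((((m₁.comp (measurable_fst.div measurable_snd)).mul (m₂.comp measurable_snd)).div
    measurable_snd).stronglyMeasurable.integral_prod_right'
      (ν := volume.restrict (Ioi 0))).measurable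

theorem mellinConv_nonneg (hg₁ : ∀ x, 0 < x → 0 ≤ g₁ x) (hg₂ : ∀ x, 0 < x → 0 ≤ g₂ x) {t : ℝ}
    (ht : 0 < t) : 0 ≤ mellinConv g₁ g₂ t :=
  setIntegral_nonneg measurableSet_Ioi fun τ (hτ : 0 < τ) =>
    div_nonneg (mul_nonneg (hg₁ _ (div_pos ht hτ)) (hg₂ τ hτ)) hτ.le

theorem integrableOn_mellinKernel_and_mellinConv_le {C₁ C₂ C₃ p ε q t : ℝ}
    (m₁ : Measurable g₁) (m₂ : Measurable g₂)
    (hg₁ : ∀ x, 0 < x → 0 ≤ g₁ x) (hg₂ : ∀ x, 0 < x → 0 ≤ g₂ x) (hpε : p < ε) (hεq : ε < q)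
    (h₁ : ∀ x, 0 < x → g₁ x ≤ C₁ * x ^ (-ε)) (h₂ : ∀ x, 0 < x → g₂ x ≤ C₂ * x ^ (-p))
    (h₃ : ∀ x, 0 < x → g₂ x ≤ C₃ * x ^ (-q)) (ht : 0 < t) :
    IntegrableOn (fun τ => g₁ (t / τ) * g₂ τ / τ) (Ioi 0) ∧
      mellinConv g₁ g₂ t ≤ C₁ * (C₂ / (ε - p) + C₃ / (q - ε)) * t ^ (-ε) := by
  set F : ℝ → ℝ := fun τ => g₁ (t / τ) * g₂ τ / τ
  have hF : Measurable F :=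
    ((m₁.comp (measurable_const.div measurable_id)).mul m₂).div measurable_id
  have hF₀ : ∀ τ, 0 < τ → 0 ≤ F τ := fun τ hτ =>
    div_nonneg (mul_nonneg (hg₁ _ (div_pos ht hτ)) (hg₂ τ hτ)) hτ.le
  have hFD : ∀ {e τ C}, 0 < τ → g₂ τ ≤ C * τ ^ (-e) →
      F τ ≤ C₁ * C * t ^ (-ε) * τ ^ (ε - e - 1) := fun hτ h =>
    mellinKernel_le ht hτ (hg₁ _ (div_pos ht hτ)) (hg₂ _ hτ) (h₁ _ (div_pos ht hτ)) h
  obtain ⟨hF₁, hle₁⟩ := integrableOn_and_setIntegral_le_of_le measurableSet_Ioc hF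
    ((intervalIntegral.intervalIntegrable_rpow' (by linarith : -1 < ε - p - 1)).1.const_mul
      (C₁ * C₂ * t ^ (-ε))) (fun τ hτ => hF₀ τ hτ.1) fun τ hτ => hFD hτ.1 (h₂ τ hτ.1)
  obtain ⟨hF₂, hle₂⟩ := integrableOn_and_setIntegral_le_of_le measurableSet_Ioi hF
    ((integrableOn_Ioi_rpow_of_lt (by linarith : ε - q - 1 < -1) one_pos).const_mul
      (C₁ * C₃ * t ^ (-ε))) (fun τ hτ => hF₀ τ (one_pos.trans hτ))
    fun τ (hτ : 1 < τ) => hFD (one_pos.trans hτ) (h₃ τ (one_pos.trans hτ))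
  have hunion : Ioc 0 1 ∪ Ioi 1 = Ioi (0 : ℝ) := Ioc_union_Ioi_eq_Ioi zero_le_one
  refine ⟨hunion ▸ hF₁.union hF₂, ?_⟩
  calc mellinConv g₁ g₂ t = (∫ τ in Ioc 0 1, F τ) + ∫ τ in Ioi 1, F τ := by
        rw [mellinConv, ← hunion, setIntegral_union (Ioc_disjoint_Ioi le_rfl) measurableSet_Ioi
          hF₁ hF₂]
    _ ≤ (∫ τ in Ioc 0 1, C₁ * C₂ * t ^ (-ε) * τ ^ (ε - p - 1)) +
          ∫ τ in Ioi 1, C₁ * C₃ * t ^ (-ε) * τ ^ (ε - q - 1) := add_le_add hle₁ hle₂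
    _ = C₁ * (C₂ / (ε - p) + C₃ / (q - ε)) * t ^ (-ε) := by
        rw [integral_const_mul, integral_const_mul, integral_Ioc_zero_one_rpow (by linarith),
          integral_Ioi_one_rpow (by linarith)]
        rw [show ε - p - 1 + 1 = ε - p by ring, show ε - q - 1 + 1 = -(q - ε) by ring]
        have : ε - p ≠ 0 := by linarith
        have : q - ε ≠ 0 := by linarith
        field_simp

def BoundedByRpowNeg (g : ℝ → ℝ) (ε : ℝ) : Prop :=
  ∃ C, ∀ x, 0 < x → g x ≤ C * x ^ (-ε)

structure Admissible (k : Kind) (g : ℝ → ℝ) : Prop where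
  measurable : Measurable g
  nonneg : ∀ x, 0 < x → 0 ≤ g x
  pos : ∀ x ∈ k.set, 0 < g x
  decay : ∃ β > 0, ∀ ε ∈ Ioo 0 β, BoundedByRpowNeg g ε

theorem integrableOn_mellinKernel_and_boundedByRpowNeg (m₁ : Measurable g₁)
    (m₂ : Measurable g₂) (hg₁ : ∀ x, 0 < x → 0 ≤ g₁ x) (hg₂ : ∀ x, 0 < x → 0 ≤ g₂ x) {β : ℝ}
    (d₁ : ∀ ε ∈ Ioo 0 β, BoundedByRpowNeg g₁ ε) (d₂ : ∀ ε ∈ Ioo 0 β, BoundedByRpowNeg g₂ ε)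
    {ε : ℝ} (hε : ε ∈ Ioo 0 β) :
    (∀ t, 0 < t → IntegrableOn (fun τ => g₁ (t / τ) * g₂ τ / τ) (Ioi 0)) ∧
      BoundedByRpowNeg (mellinConv g₁ g₂) ε := by
  obtain ⟨C₁, h₁⟩ := d₁ ε hε
  obtain ⟨hε₀, hεβ⟩ := hε
  obtain ⟨C₂, h₂⟩ := d₂ (ε / 2) ⟨by positivity, by linarith⟩
  obtain ⟨C₃, h₃⟩ := d₂ ((ε + β) / 2) ⟨by linarith, by linarith⟩
  have key := fun t (ht : 0 < t) => integrableOn_mellinKernel_and_mellinConv_le m₁ m₂ hg₁ hg₂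
    (by linarith : ε / 2 < ε) (by linarith : ε < (ε + β) / 2) h₁ h₂ h₃ ht
  exact ⟨fun t ht => (key t ht).1, _, fun t ht => (key t ht).2⟩

theorem mellinConv_pos {k₁ k₂ : Kind} (h₁ : Admissible k₁ g₁) (h₂ : Admissible k₂ g₂) {t : ℝ}
    (hint : IntegrableOn (fun τ => g₁ (t / τ) * g₂ τ / τ) (Ioi 0))
    (ht : t ∈ (k₁.mul k₂).set) : 0 < mellinConv g₁ g₂ t := by
  have ht₀ : 0 < t := Kind.set_subset_Ioi_zero _ ht
  obtain ⟨x, hx, y, hy, rfl⟩ := Kind.set_mul_subset k₁ k₂ ht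
  set U := k₂.set ∩ (fun τ => x * y / τ) ⁻¹' k₁.set
  have hU : IsOpen U :=
    (continuousOn_const.div continuousOn_id fun τ hτ =>
      (k₂.set_subset_Ioi_zero hτ).ne').isOpen_inter_preimage k₂.isOpen_set k₁.isOpen_set
  have hyU : y ∈ U :=
    ⟨hy, by simpa [mul_div_cancel_right₀ x (k₂.set_subset_Ioi_zero hy).ne'] using hx⟩
  refine setIntegral_pos_of_pos_on_isOpen measurableSet_Ioi hint
    (fun τ (hτ : 0 < τ) => div_nonneg (mul_nonneg (h₁.nonneg _ (div_pos ht₀ hτ))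
      (h₂.nonneg τ hτ)) hτ.le) hU ⟨y, hyU⟩ (fun τ hτ => k₂.set_subset_Ioi_zero hτ.1) ?_
  rintro τ ⟨hτ₂, hτ₁⟩
  exact div_pos (mul_pos (h₁.pos _ hτ₁) (h₂.pos τ hτ₂)) (k₂.set_subset_Ioi_zero hτ₂)

theorem Admissible.mellinConv {k₁ k₂ : Kind} (h₁ : Admissible k₁ g₁) (h₂ : Admissible k₂ g₂) :
    Admissible (k₁.mul k₂) (mellinConv g₁ g₂) := by
  obtain ⟨β₁, hβ₁, d₁⟩ := h₁.decay
  obtain ⟨β₂, hβ₂, d₂⟩ := h₂.decay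
  have hβ : 0 < min β₁ β₂ := lt_min hβ₁ hβ₂
  have key := fun ε (hε : ε ∈ Ioo 0 (min β₁ β₂)) =>
    integrableOn_mellinKernel_and_boundedByRpowNeg h₁.measurable h₂.measurable h₁.nonneg
      h₂.nonneg (fun ε hε => d₁ ε ⟨hε.1, hε.2.trans_le (min_le_left _ _)⟩)
      (fun ε hε => d₂ ε ⟨hε.1, hε.2.trans_le (min_le_right _ _)⟩) hε
  have hint := (key (min β₁ β₂ / 2) ⟨by positivity, by linarith⟩).1
  exact ⟨measurable_mellinConv h₁.measurable h₂.measurable,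
    fun t ht => mellinConv_nonneg h₁.nonneg h₂.nonneg ht,
    fun t ht => mellinConv_pos h₁ h₂ (hint t (Kind.set_subset_Ioi_zero _ ht)) ht,
    min β₁ β₂, hβ, fun ε hε => (key ε hε).2⟩

theorem Admissible.foldl_mellinConv {L : List ((ℝ → ℝ) × Kind)}
    (hL : ∀ p ∈ L, Admissible p.2 p.1) {k : Kind} {g : ℝ → ℝ} (hg : Admissible k g) :
    Admissible ((L.map Prod.snd).foldl Kind.mul k)
      ((L.map Prod.fst).foldl _root_.mellinConv g) := by
  induction L generalizing k g with
  | nil => exact hg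
  | cons p L ih => exact ih (fun q hq => hL q (.tail _ hq)) (hg.mellinConv (hL p (.head _)))

theorem mellinConvList_pos {L : List ((ℝ → ℝ) × Kind)} (hL : ∀ p ∈ L, Admissible p.2 p.1)
    (hkinds : .full ∈ L.map Prod.snd ∨ (.low ∈ L.map Prod.snd ∧ .high ∈ L.map Prod.snd))
    {t : ℝ} (ht : 0 < t) : 0 < mellinConvList (L.map Prod.fst) t := by
  obtain _ | ⟨p, L⟩ := L
  · simp at hkinds
  have hfull : (L.map Prod.snd).foldl Kind.mul p.2 = .full := Kind.foldl_mul_eq_full hkinds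
  have hadm := Admissible.foldl_mellinConv (fun q hq => hL q (.tail _ hq)) (hL p (.head _))
  rw [hfull] at hadm
  exact hadm.pos t ht

theorem boundedByRpowNeg_of_le_of_le_rpow {g : ℝ → ℝ} {C γ ε : ℝ} (hC : 0 ≤ C) (hε : 0 ≤ ε)
    (hεγ : ε ≤ γ) (h₀ : ∀ x ∈ Ioc 0 1, g x ≤ C) (h₁ : ∀ x, 1 < x → g x ≤ C * x ^ (-γ)) :
    BoundedByRpowNeg g ε := by
  refine ⟨C, fun x hx => ?_⟩
  rcases le_or_gt x 1 with hx₁ | hx₁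
  · exact (h₀ x ⟨hx, hx₁⟩).trans (le_mul_of_one_le_right hC
      (Real.one_le_rpow_of_pos_of_le_one_of_nonpos hx hx₁ (by linarith)))
  · exact (h₁ x hx₁).trans
      (mul_le_mul_of_nonneg_left (Real.rpow_le_rpow_of_exponent_le hx₁.le (by linarith)) hC)

theorem rpow_le_rpow_self_mul_exp {u c : ℝ} (hu : 0 ≤ u) (hc : 0 ≤ c) :
    u ^ c ≤ c ^ c * Real.exp u := by
  rcases hc.eq_or_lt with rfl | hc
  · simpa using Real.one_le_exp hu
  calc u ^ c = c ^ c * (u / c) ^ c := by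
        rw [Real.div_rpow hu hc.le]
        have : 0 < c ^ c := by positivity
        field_simp
    _ ≤ c ^ c * Real.exp (u / c) ^ c := by
        gcongr
        linarith [Real.add_one_le_exp (u / c)]
    _ = c ^ c * Real.exp u := by rw [← Real.exp_mul, div_mul_cancel₀ u hc.ne']

theorem admissible_phiElem {a b : ℝ} (ha : 0 < a) (hb : 0 ≤ b) :
    Admissible .full (phiElem a b) := by
  have hpos : ∀ x, 0 < x → 0 < phiElem a b x := fun x hx => by unfold phiElem; positivity
  refine ⟨by unfold phiElem; fun_prop, fun x hx => (hpos x hx).le, hpos, 1, one_pos,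
    fun ε hε => ⟨(b + a * ε) ^ (b + a * ε) / a, fun x hx => ?_⟩⟩
  have hε₀ : 0 < ε := hε.1
  have hpow : (x ^ (1 / a)) ^ (b + a * ε) = x ^ (b / a) * x ^ ε := by
    rw [← Real.rpow_mul hx.le, ← Real.rpow_add hx]
    congr 1
    field_simp
  have hbound := rpow_le_rpow_self_mul_exp (Real.rpow_nonneg hx.le (1 / a))
    (by positivity : 0 ≤ b + a * ε)
  rw [hpow] at hbound
  have hxε : x ^ (b / a) ≤ (b + a * ε) ^ (b + a * ε) * Real.exp (x ^ (1 / a)) * x ^ (-ε) := by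
    rw [Real.rpow_neg hx.le, ← div_eq_mul_inv, le_div_iff₀ (by positivity)]
    exact hbound
  calc phiElem a b x = 1 / a * x ^ (b / a) * Real.exp (-x ^ (1 / a)) := rfl
    _ ≤ 1 / a * ((b + a * ε) ^ (b + a * ε) * Real.exp (x ^ (1 / a)) * x ^ (-ε)) *
        Real.exp (-x ^ (1 / a)) := by gcongr
    _ = (b + a * ε) ^ (b + a * ε) / a * x ^ (-ε) := by
        rw [Real.exp_neg]
        field_simp

theorem admissible_phi2Elem {a b c : ℝ} (ha : 0 < a) (hb : 0 ≤ b) (hc : b + 1 ≤ c) :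
    Admissible .low (phi2Elem a b c) := by
  have hΓ : 0 < Real.Gamma (c - b) := Real.Gamma_pos_of_pos (by linarith)
  have hu : ∀ x : ℝ, 0 < x → x < 1 → 0 ≤ 1 - x ^ (1 / a) ∧ 1 - x ^ (1 / a) ≤ 1 := fun x hx hx₁ =>
    ⟨by linarith [Real.rpow_le_one hx.le hx₁.le (by positivity : 0 ≤ 1 / a)],
      by linarith [Real.rpow_nonneg hx.le (1 / a)]⟩
  have hnonneg : ∀ x, 0 < x → 0 ≤ phi2Elem a b c x := fun x hx => by
    unfold phi2Elem
    split_ifs with hx₁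
    · have := Real.rpow_nonneg (hu x hx hx₁).1 (c - b - 1)
      positivity
    · exact le_rfl
  refine ⟨Measurable.ite (measurableSet_lt measurable_id measurable_const) (by fun_prop)
    measurable_const, hnonneg, fun x ⟨hx, hx₁⟩ => ?_, 1, one_pos, fun ε hε => ?_⟩
  · have hu₁ : x ^ (1 / a) < 1 := Real.rpow_lt_one hx.le hx₁ (by positivity)
    have := Real.rpow_pos_of_pos (by linarith : 0 < 1 - x ^ (1 / a)) (c - b - 1)
    simp only [phi2Elem, if_pos hx₁]
    positivity
  refine boundedByRpowNeg_of_le_of_le_rpow (by positivity : 0 ≤ 1 / (a * Real.Gamma (c - b)))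
    hε.1.le hε.2.le (fun x ⟨hx, hx₁⟩ => ?_) fun x hx₁ => ?_
  · unfold phi2Elem
    split_ifs with hx₁'
    · calc 1 / (a * Real.Gamma (c - b)) * x ^ (b / a) * (1 - x ^ (1 / a)) ^ (c - b - 1)
          ≤ 1 / (a * Real.Gamma (c - b)) * 1 * 1 := by
            gcongr
            · exact Real.rpow_nonneg (hu x hx hx₁').1 _
            · exact Real.rpow_le_one hx.le hx₁ (by positivity)
            · exact Real.rpow_le_one (hu x hx hx₁').1 (hu x hx hx₁').2 (by linarith)
        _ = 1 / (a * Real.Gamma (c - b)) := by ring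
    · positivity
  · simp only [phi2Elem, if_neg (not_lt.2 hx₁.le)]
    have := Real.rpow_nonneg (zero_le_one.trans hx₁.le) (-1)
    positivity

theorem admissible_psiElem {a b c : ℝ} (ha : 0 < a) (hb : 0 ≤ b) (hc : 0 < c) :
    Admissible .full (psiElem a b c) := by
  have hΓ : 0 < Real.Gamma (b + c) := Real.Gamma_pos_of_pos (by linarith)
  have hpos : ∀ x, 0 < x → 0 < psiElem a b c x := fun x hx => by unfold psiElem; positivity
  refine ⟨by unfold psiElem; fun_prop, fun x hx => (hpos x hx).le, hpos, c / a, by positivity,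
    fun ε hε => boundedByRpowNeg_of_le_of_le_rpow (by positivity : 0 ≤ Real.Gamma (b + c) / a)
      hε.1.le hε.2.le (fun x ⟨hx, hx₁⟩ => ?_) fun x hx₁ => ?_⟩
  · have hu : 0 ≤ x ^ (1 / a) := Real.rpow_nonneg hx.le _
    calc psiElem a b c x ≤ Real.Gamma (b + c) / a * 1 * 1 := by
          unfold psiElem
          gcongr
          · exact Real.rpow_le_one hx.le hx₁ (by positivity)
          · exact Real.rpow_le_one_of_one_le_of_nonpos (by linarith) (by linarith)
      _ = Real.Gamma (b + c) / a := by ring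
  · have hx : 0 < x := one_pos.trans hx₁
    have hu : 0 < x ^ (1 / a) := by positivity
    calc psiElem a b c x ≤ Real.Gamma (b + c) / a * x ^ (b / a) * (x ^ (1 / a)) ^ (-b - c) := by
          unfold psiElem
          exact mul_le_mul_of_nonneg_left
            (Real.rpow_le_rpow_of_nonpos hu (by linarith) (by linarith)) (by positivity)
      _ = Real.Gamma (b + c) / a * x ^ (-(c / a)) := by
          rw [mul_assoc, ← Real.rpow_mul hx.le, ← Real.rpow_add hx]
          congr 2
          field_simp
          ring

theorem admissible_etaElem {a b c : ℝ} (ha : 0 < a) (hb : 0 < b) (hc : b + 1 ≤ c) :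
    Admissible .high (etaElem a b c) := by
  have hΓ : 0 < Real.Gamma (c - b) := Real.Gamma_pos_of_pos (by linarith)
  have hu : ∀ x : ℝ, 1 < x → 1 < x ^ (1 / a) := fun x hx₁ =>
    Real.one_lt_rpow hx₁ (by positivity)
  have hnonneg : ∀ x, 0 < x → 0 ≤ etaElem a b c x := fun x hx => by
    unfold etaElem
    split_ifs with hx₁
    · have := Real.rpow_nonneg (by linarith [hu x hx₁] : 0 ≤ x ^ (1 / a) - 1) (c - b - 1)
      positivity
    · exact le_rfl
  refine ⟨Measurable.ite (measurableSet_lt measurable_const measurable_id) (by fun_prop)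
    measurable_const, hnonneg, fun x (hx₁ : 1 < x) => ?_, b / a, by positivity, fun ε hε => ?_⟩
  · have := Real.rpow_pos_of_pos (by linarith [hu x hx₁] : 0 < x ^ (1 / a) - 1) (c - b - 1)
    have hx : 0 < x := one_pos.trans hx₁
    simp only [etaElem, if_pos hx₁]
    positivity
  refine boundedByRpowNeg_of_le_of_le_rpow (by positivity : 0 ≤ 1 / (a * Real.Gamma (c - b)))
    hε.1.le hε.2.le (fun x ⟨_, hx₁⟩ => ?_) fun x hx₁ => ?_
  · simp only [etaElem, if_neg (not_lt.2 hx₁)]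
    positivity
  · have hx : 0 < x := one_pos.trans hx₁
    calc etaElem a b c x
        ≤ 1 / (a * Real.Gamma (c - b)) * x ^ ((1 - c) / a) * (x ^ (1 / a)) ^ (c - b - 1) := by
          simp only [etaElem, if_pos hx₁]
          gcongr
          · linarith [hu x hx₁]
          · linarith
          · linarith
      _ = 1 / (a * Real.Gamma (c - b)) * x ^ (-(b / a)) := by
          rw [mul_assoc, ← Real.rpow_mul hx.le, ← Real.rpow_add hx]
          congr 2
          field_simp
          ring

end MellinPositivity

open MellinPositivity

theorem stmt_7 (n₁ n₂ n₃ n₄ : ℕ)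
    (a b : Fin n₁ → ℝ) (a' c d : Fin n₂ → ℝ)
    (a'' o r : Fin n₃ → ℝ) (a''' v w : Fin n₄ → ℝ)
    (ha : ∀ j, 0 < a j) (hb : ∀ j, 0 ≤ b j)
    (ha' : ∀ j, 0 < a' j) (hc : ∀ j, 0 ≤ c j) (hd : ∀ j, c j + 1 ≤ d j)
    (ha'' : ∀ j, 0 < a'' j) (hr : ∀ j, 0 < r j) (ho : ∀ j, 0 ≤ o j)
    (ha''' : ∀ j, 0 < a''' j) (hv : ∀ j, 0 < v j) (hw : ∀ j, v j + 1 ≤ w j)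
    (hne : ¬(n₁ = 0 ∧ n₂ = 0 ∧ n₃ = 0 ∧ n₄ = 0))
    (hcase₁ : ¬(n₁ = 0 ∧ n₃ = 0 ∧ n₄ = 0 ∧ 1 ≤ n₂))
    (hcase₂ : ¬(n₁ = 0 ∧ n₂ = 0 ∧ n₃ = 0 ∧ 1 ≤ n₄))
    (f : ℝ → ℝ)
    (hf : f = mellinConvList
      ((List.ofFn fun j => phiElem (a j) (b j)) ++
       (List.ofFn fun j => phi2Elem (a' j) (c j) (d j)) ++
       (List.ofFn fun j => psiElem (a'' j) (o j) (r j)) ++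
       (List.ofFn fun j => etaElem (a''' j) (v j) (w j)))) :
    ∀ t : ℝ, 0 < t → 0 < f t := by
  set T : List ((ℝ → ℝ) × Kind) :=
    (List.ofFn fun j => (phiElem (a j) (b j), .full)) ++
    (List.ofFn fun j => (phi2Elem (a' j) (c j) (d j), .low)) ++
    (List.ofFn fun j => (psiElem (a'' j) (o j) (r j), .full)) ++
    (List.ofFn fun j => (etaElem (a''' j) (v j) (w j), .high))
  have hT : T.map Prod.fst =
      (List.ofFn fun j => phiElem (a j) (b j)) ++
      (List.ofFn fun j => phi2Elem (a' j) (c j) (d j)) ++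
      (List.ofFn fun j => psiElem (a'' j) (o j) (r j)) ++
      (List.ofFn fun j => etaElem (a''' j) (v j) (w j)) := by
    simp [T, List.map_ofFn, Function.comp_def]
  have hadm : ∀ p ∈ T, Admissible p.2 p.1 := by
    simp only [T, List.mem_append, List.mem_ofFn]
    rintro _ (((⟨j, rfl⟩ | ⟨j, rfl⟩) | ⟨j, rfl⟩) | ⟨j, rfl⟩)
    exacts [admissible_phiElem (ha j) (hb j), admissible_phi2Elem (ha' j) (hc j) (hd j),
      admissible_psiElem (ha'' j) (ho j) (hr j), admissible_etaElem (ha''' j) (hv j) (hw j)]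
  intro t ht
  rw [hf, ← hT]
  refine mellinConvList_pos hadm ?_ ht
  simp only [List.append_assoc, List.map_append, List.map_ofFn, Function.comp_def,
    List.ofFn_const, List.mem_append, List.mem_replicate, ne_eq, and_true, reduceCtorEq, and_false,
    or_false, false_or, or_self, T]
  omega
end

section
/- Let n₂ ≥ 1 and let f : (0,∞) → ℝ be the iterated Mellin convolution f = ϕ_{a'₁,c₁,d₁} ⋁ ⋯ ⋁ ϕ_{a'_{n₂},c_{n₂},d_{n₂}}, where a'_j > 0, c_j ≥ 0, d_j ≥ c_j + 1 for j = 1,…,n₂. Then f(t) > 0 for every 0 < t < 1 and f(t) = 0 for every t ≥ 1. -/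
/-! Call `g` admissible if it is measurable, positive on `(0, 1)`, zero on `[1, ∞)` and bounded
there by `C t^{-1/2}`. Because both factors vanish on `[1, ∞)`, `(g ⋁ φ)(t)` is an integral over
`τ ∈ (t, 1)`, empty for `t ≥ 1`; for `t < 1` its integrand is positive, and if `φ ≤ K` it is at most
`C K t^{-1/2} τ^{-1/2}`, whose integral is at most `2 C K t^{-1/2}`. So convolving with a bounded
`ϕ_{a,b,c}` preserves admissibility. A plain bound would not survive: `∫_t^1 dτ/τ = log (1/t)`. -/

open MeasureTheory Set

theorem setIntegral_Ioo_pos {f : ℝ → ℝ} {a b : ℝ} (hab : a < b) (hf : IntegrableOn f (Ioo a b))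
    (hpos : ∀ x ∈ Ioo a b, 0 < f x) : 0 < ∫ x in Ioo a b, f x := by
  rw [setIntegral_pos_iff_support_of_nonneg_ae
    ((ae_restrict_iff' measurableSet_Ioo).2 (ae_of_all _ fun x hx => (hpos x hx).le)) hf]
  exact ((Measure.measure_Ioo_pos _).2 hab).trans_le <|
    measure_mono fun x hx => ⟨(hpos x hx).ne', hx⟩

theorem integral_Ioo_rpow_neg_half_le {t : ℝ} (ht : 0 ≤ t) (ht1 : t ≤ 1) :
    ∫ τ in Ioo t 1, τ ^ (-(1 / 2) : ℝ) ≤ 2 := by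
  rw [← integral_Ioc_eq_integral_Ioo, ← intervalIntegral.integral_of_le ht1,
    integral_rpow (Or.inl (by norm_num)), Real.one_rpow]
  have := Real.rpow_nonneg ht (-(1 / 2) + 1 : ℝ)
  norm_num
  linarith

theorem integrableOn_Ioo_rpow_neg_half {t : ℝ} (ht1 : t ≤ 1) :
    IntegrableOn (fun τ : ℝ => τ ^ (-(1 / 2) : ℝ)) (Ioo t 1) :=
  ((intervalIntegrable_iff_integrableOn_Ioc_of_le ht1).1
    (intervalIntegral.intervalIntegrable_rpow' (by norm_num))).mono_set Ioo_subset_Ioc_self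

theorem rpow_neg_half_div_div {t τ : ℝ} (ht : 0 ≤ t) (hτ : 0 < τ) :
    (t / τ) ^ (-(1 / 2) : ℝ) / τ = t ^ (-(1 / 2) : ℝ) * τ ^ (-(1 / 2) : ℝ) := by
  rw [Real.div_rpow ht hτ.le, div_div, ← Real.rpow_add_one hτ.ne', div_eq_mul_inv,
    ← Real.rpow_neg hτ.le]
  norm_num

section MellinConv

variable {g φ : ℝ → ℝ}

theorem measurable_mellinConv (hg : Measurable g) (hφ : Measurable φ) :
    Measurable (mellinConv g φ) :=
  (((hg.comp (measurable_fst.div measurable_snd)).mul (hφ.comp measurable_snd)).div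
    measurable_snd).stronglyMeasurable.integral_prod_right'.measurable

theorem mellinConv_eq_integral_Ioo (hg : ∀ t, 1 ≤ t → g t = 0) (hφ : ∀ t, 1 ≤ t → φ t = 0)
    {t : ℝ} (ht : 0 < t) : mellinConv g φ t = ∫ τ in Ioo t 1, g (t / τ) * φ τ / τ := by
  refine setIntegral_eq_of_subset_of_forall_sdiff_eq_zero measurableSet_Ioi
    (fun τ hτ => ht.trans hτ.1) fun τ ⟨hτ0, hτ⟩ => ?_
  rcases not_and_or.1 hτ with hτt | hτ1
  · rw [hg _ ((one_le_div hτ0).2 (not_lt.1 hτt)), zero_mul, zero_div]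
  · rw [hφ _ (not_lt.1 hτ1), mul_zero, zero_div]

theorem mellinConv_eq_zero_of_one_le (hg : ∀ t, 1 ≤ t → g t = 0) (hφ : ∀ t, 1 ≤ t → φ t = 0)
    {t : ℝ} (ht : 1 ≤ t) : mellinConv g φ t = 0 := by
  rw [mellinConv_eq_integral_Ioo hg hφ (one_pos.trans_le ht), Ioo_eq_empty (not_lt.2 ht),
    Measure.restrict_empty, integral_zero_measure]

end MellinConv

structure MellinAdmissible (g : ℝ → ℝ) : Prop where
  measurable : Measurable g
  pos : ∀ t, 0 < t → t < 1 → 0 < g t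
  eq_zero : ∀ t, 1 ≤ t → g t = 0
  le_rpow : ∃ C, ∀ t, 0 < t → t < 1 → g t ≤ C * t ^ (-(1 / 2) : ℝ)

namespace MellinAdmissible

variable {g φ : ℝ → ℝ}

theorem nonneg (hg : MellinAdmissible g) {t : ℝ} (ht : 0 < t) : 0 ≤ g t := by
  rcases lt_or_ge t 1 with ht1 | ht1
  · exact (hg.pos t ht ht1).le
  · exact (hg.eq_zero t ht1).ge

theorem of_bddAbove (hm : Measurable g) (hpos : ∀ t, 0 < t → t < 1 → 0 < g t)
    (hzero : ∀ t, 1 ≤ t → g t = 0) (hbdd : BddAbove (g '' Ioo 0 1)) : MellinAdmissible g := by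
  obtain ⟨K, hK⟩ := hbdd
  refine ⟨hm, hpos, hzero, K, fun t ht ht1 => ?_⟩
  have hgK : g t ≤ K := hK (mem_image_of_mem g ⟨ht, ht1⟩)
  calc g t ≤ K * 1 := by rwa [mul_one]
    _ ≤ K * t ^ (-(1 / 2) : ℝ) := mul_le_mul_of_nonneg_left
        (Real.one_le_rpow_of_pos_of_le_one_of_nonpos ht ht1.le (by norm_num))
        ((hpos t ht ht1).le.trans hgK)

theorem integrand_le (hg : MellinAdmissible g) (hφ : MellinAdmissible φ) {C K t τ : ℝ}
    (hC : ∀ s, 0 < s → s < 1 → g s ≤ C * s ^ (-(1 / 2) : ℝ))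
    (hK : ∀ s, 0 < s → s < 1 → φ s ≤ K) (ht : 0 < t) (hτ : τ ∈ Ioo t 1) :
    g (t / τ) * φ τ / τ ≤ C * K * t ^ (-(1 / 2) : ℝ) * τ ^ (-(1 / 2) : ℝ) := by
  have hτ0 : 0 < τ := ht.trans hτ.1
  have hq : 0 < t / τ := div_pos ht hτ0
  have hq1 : t / τ < 1 := (div_lt_one hτ0).2 hτ.1
  have hgC := hC _ hq hq1
  calc g (t / τ) * φ τ / τ ≤ C * (t / τ) ^ (-(1 / 2) : ℝ) * K / τ := by
        gcongr
        exacts [hφ.nonneg hτ0, (hg.nonneg hq).trans hgC, hK τ hτ0 hτ.2]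
    _ = C * K * ((t / τ) ^ (-(1 / 2) : ℝ) / τ) := by ring
    _ = C * K * t ^ (-(1 / 2) : ℝ) * τ ^ (-(1 / 2) : ℝ) := by
        rw [rpow_neg_half_div_div ht.le hτ0]; ring

theorem integrableOn_integrand (hg : MellinAdmissible g) (hφ : MellinAdmissible φ) {C K t : ℝ}
    (hC : ∀ s, 0 < s → s < 1 → g s ≤ C * s ^ (-(1 / 2) : ℝ))
    (hK : ∀ s, 0 < s → s < 1 → φ s ≤ K) (ht : 0 < t) (ht1 : t < 1) :
    IntegrableOn (fun τ => g (t / τ) * φ τ / τ) (Ioo t 1) := by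
  refine ((integrableOn_Ioo_rpow_neg_half ht1.le).const_mul (C * K * t ^ (-(1 / 2) : ℝ))).mono'
    (((hg.measurable.comp (measurable_const.div measurable_id)).mul hφ.measurable).div
      measurable_id).aestronglyMeasurable ?_
  refine (ae_restrict_iff' measurableSet_Ioo).2 (ae_of_all _ fun τ hτ => ?_)
  have hτ0 : 0 < τ := ht.trans hτ.1
  rw [Real.norm_of_nonneg (div_nonneg (mul_nonneg (hg.nonneg (div_pos ht hτ0))
    (hφ.nonneg hτ0)) hτ0.le)]
  exact hg.integrand_le hφ hC hK ht hτ

theorem mellinConv (hg : MellinAdmissible g) (hφ : MellinAdmissible φ)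
    (hφb : BddAbove (φ '' Ioo 0 1)) : MellinAdmissible (mellinConv g φ) := by
  obtain ⟨C, hC⟩ := hg.le_rpow
  obtain ⟨K, hK'⟩ := hφb
  have hK : ∀ s, 0 < s → s < 1 → φ s ≤ K := fun s hs hs1 => hK' (mem_image_of_mem φ ⟨hs, hs1⟩)
  have half : (0 : ℝ) < 1 / 2 ∧ (1 / 2 : ℝ) < 1 := by norm_num
  have hC0 : 0 ≤ C := (pos_of_mul_pos_left ((hg.pos _ half.1 half.2).trans_le
    (hC _ half.1 half.2)) (Real.rpow_nonneg half.1.le _)).le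
  have hK0 : 0 ≤ K := (hφ.pos _ half.1 half.2).le.trans (hK _ half.1 half.2)
  refine ⟨measurable_mellinConv hg.measurable hφ.measurable, fun t ht ht1 => ?_,
    fun t => mellinConv_eq_zero_of_one_le hg.eq_zero hφ.eq_zero, 2 * (C * K), fun t ht ht1 => ?_⟩
  all_goals rw [mellinConv_eq_integral_Ioo hg.eq_zero hφ.eq_zero ht]
  · refine setIntegral_Ioo_pos ht1 (hg.integrableOn_integrand hφ hC hK ht ht1) fun τ hτ => ?_
    have hτ0 : 0 < τ := ht.trans hτ.1
    exact div_pos (mul_pos (hg.pos _ (div_pos ht hτ0) ((div_lt_one hτ0).2 hτ.1))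
      (hφ.pos τ hτ0 hτ.2)) hτ0
  · calc ∫ τ in Ioo t 1, g (t / τ) * φ τ / τ
        ≤ ∫ τ in Ioo t 1, C * K * t ^ (-(1 / 2) : ℝ) * τ ^ (-(1 / 2) : ℝ) :=
          setIntegral_mono_on (hg.integrableOn_integrand hφ hC hK ht ht1)
            ((integrableOn_Ioo_rpow_neg_half ht1.le).const_mul _)
            measurableSet_Ioo fun τ hτ => hg.integrand_le hφ hC hK ht hτ
      _ = C * K * t ^ (-(1 / 2) : ℝ) * ∫ τ in Ioo t 1, τ ^ (-(1 / 2) : ℝ) := integral_const_mul _ _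
      _ ≤ C * K * t ^ (-(1 / 2) : ℝ) * 2 := by
          gcongr
          exact integral_Ioo_rpow_neg_half_le ht.le ht1.le
      _ = 2 * (C * K) * t ^ (-(1 / 2) : ℝ) := by ring

end MellinAdmissible

section Phi2Elem

variable {a b c : ℝ}

theorem measurable_phi2Elem : Measurable (phi2Elem a b c) :=
  Measurable.ite (measurableSet_lt measurable_id measurable_const)
    ((measurable_const.mul (measurable_id.pow_const _)).mul
      ((measurable_const.sub (measurable_id.pow_const _)).pow_const _)) measurable_const

theorem phi2Elem_pos (ha : 0 < a) (hbc : b < c) {t : ℝ} (ht : 0 < t) (ht1 : t < 1) :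
    0 < phi2Elem a b c t := by
  have hG : 0 < Real.Gamma (c - b) := Real.Gamma_pos_of_pos (by linarith)
  have hbase : 0 < 1 - t ^ (1 / a) := sub_pos.2 (Real.rpow_lt_one ht.le ht1 (by positivity))
  rw [phi2Elem, if_pos ht1]
  positivity

theorem phi2Elem_eq_zero {t : ℝ} (ht : 1 ≤ t) : phi2Elem a b c t = 0 :=
  if_neg (not_lt.2 ht)

theorem phi2Elem_le (ha : 0 < a) (hb : 0 ≤ b) (hbc : b + 1 ≤ c) {t : ℝ} (ht : 0 < t)
    (ht1 : t < 1) : phi2Elem a b c t ≤ 1 / (a * Real.Gamma (c - b)) := by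
  have hG : 0 < Real.Gamma (c - b) := Real.Gamma_pos_of_pos (by linarith)
  have hpow : t ^ (b / a) ≤ 1 := Real.rpow_le_one ht.le ht1.le (by positivity)
  have hbase : 0 ≤ 1 - t ^ (1 / a) := sub_nonneg.2 (Real.rpow_le_one ht.le ht1.le (by positivity))
  have hbase1 : 1 - t ^ (1 / a) ≤ 1 := sub_le_self _ (Real.rpow_nonneg ht.le _)
  rw [phi2Elem, if_pos ht1]
  calc 1 / (a * Real.Gamma (c - b)) * t ^ (b / a) * (1 - t ^ (1 / a)) ^ (c - b - 1)
      ≤ 1 / (a * Real.Gamma (c - b)) * 1 * 1 := by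
        gcongr
        exact Real.rpow_le_one hbase hbase1 (by linarith)
    _ = 1 / (a * Real.Gamma (c - b)) := by ring

theorem bddAbove_phi2Elem (ha : 0 < a) (hb : 0 ≤ b) (hbc : b + 1 ≤ c) :
    BddAbove (phi2Elem a b c '' Ioo 0 1) :=
  ⟨_, forall_mem_image.2 fun _ ht => phi2Elem_le ha hb hbc ht.1 ht.2⟩

theorem mellinAdmissible_phi2Elem (ha : 0 < a) (hb : 0 ≤ b) (hbc : b + 1 ≤ c) :
    MellinAdmissible (phi2Elem a b c) :=
  .of_bddAbove measurable_phi2Elem (fun _ => phi2Elem_pos ha (by linarith))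
    (fun _ => phi2Elem_eq_zero) (bddAbove_phi2Elem ha hb hbc)

end Phi2Elem

theorem mellinAdmissible_foldl_mellinConv {l : List (ℝ → ℝ)}
    (hl : ∀ φ ∈ l, MellinAdmissible φ ∧ BddAbove (φ '' Ioo 0 1)) {g : ℝ → ℝ}
    (hg : MellinAdmissible g) : MellinAdmissible (l.foldl mellinConv g) := by
  induction l generalizing g with
  | nil => exact hg
  | cons φ l ih =>
    obtain ⟨hφ, hφb⟩ := hl φ List.mem_cons_self
    exact ih (fun ψ hψ => hl ψ (List.mem_cons_of_mem _ hψ)) (hg.mellinConv hφ hφb)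

theorem mellinAdmissible_mellinConvList {l : List (ℝ → ℝ)} (hne : l ≠ [])
    (hl : ∀ φ ∈ l, MellinAdmissible φ ∧ BddAbove (φ '' Ioo 0 1)) :
    MellinAdmissible (mellinConvList l) := by
  obtain ⟨g, l, rfl⟩ := List.exists_cons_of_ne_nil hne
  exact mellinAdmissible_foldl_mellinConv (fun φ hφ => hl φ (List.mem_cons_of_mem _ hφ))
    (hl g List.mem_cons_self).1

theorem stmt_8 (n₂ : ℕ) (hn₂ : 1 ≤ n₂)
    (a' c d : Fin n₂ → ℝ)
    (ha' : ∀ j, 0 < a' j) (hc : ∀ j, 0 ≤ c j) (hd : ∀ j, c j + 1 ≤ d j)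
    (f : ℝ → ℝ)
    (hf : f = mellinConvList (List.ofFn fun j => phi2Elem (a' j) (c j) (d j))) :
    (∀ t : ℝ, 0 < t → t < 1 → 0 < f t) ∧ (∀ t : ℝ, 1 ≤ t → f t = 0) := by
  have hne : List.ofFn (fun j => phi2Elem (a' j) (c j) (d j)) ≠ [] := by
    rw [Ne, List.ofFn_eq_nil_iff]
    omega
  have hadm : MellinAdmissible f := hf ▸ mellinAdmissible_mellinConvList hne <| by
    simp only [List.mem_ofFn, forall_exists_index]
    rintro _ j rfl
    exact ⟨mellinAdmissible_phi2Elem (ha' j) (hc j) (hd j), bddAbove_phi2Elem (ha' j) (hc j) (hd j)⟩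
  exact ⟨hadm.pos, hadm.eq_zero⟩
end

section
/- Let n₄ ≥ 1 and let f : (0,∞) → ℝ be the iterated Mellin convolution f = η_{a'''₁,v₁,w₁} ⋁ ⋯ ⋁ η_{a'''_{n₄},v_{n₄},w_{n₄}}, where a'''_j > 0, v_j > 0, w_j ≥ v_j + 1 for j = 1,…,n₄. Then f(t) = 0 for every 0 < t ≤ 1 and f(t) > 0 for every t > 1. -/
open MeasureTheory Set

/-!
Every `η_{a,b,c}` is measurable, vanishes on `(0, 1]`, is positive on `(1, ∞)` and is bounded on
bounded sets, and this class of functions is stable under Mellin convolution: the integrand of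
`(g₁ ⋁ g₂)(t)` vanishes unless `1 < τ < t`, and there it is positive and bounded, so
`(g₁ ⋁ g₂)(t)` is the integral of a bounded positive function over `(1, t)`.
-/

structure IsPositiveBeyondOne (g : ℝ → ℝ) : Prop where
  measurable : Measurable g
  eq_zero_of_le_one : ∀ t ≤ 1, g t = 0
  pos_of_one_lt : ∀ t, 1 < t → 0 < g t
  bddAbove_image_Iic : ∀ T, BddAbove (g '' Iic T)

theorem IsPositiveBeyondOne.nonneg {g : ℝ → ℝ} (hg : IsPositiveBeyondOne g) : 0 ≤ g := by
  intro t
  rcases le_or_gt t 1 with ht | ht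
  · exact (hg.eq_zero_of_le_one t ht).ge
  · exact (hg.pos_of_one_lt t ht).le

section Eta

variable {a b c : ℝ}

theorem etaElem_eq_zero_of_le_one {t : ℝ} (ht : t ≤ 1) : etaElem a b c t = 0 :=
  if_neg (not_lt.2 ht)

theorem etaElem_pos_of_one_lt (ha : 0 < a) (hbc : b < c) {t : ℝ} (ht : 1 < t) :
    0 < etaElem a b c t := by
  have hΓ : 0 < Real.Gamma (c - b) := Real.Gamma_pos_of_pos (sub_pos.2 hbc)
  have hbase : 0 < t ^ (1 / a) - 1 :=
    sub_pos.2 (Real.one_lt_rpow ht (one_div_pos.2 ha))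
  rw [etaElem, if_pos ht]
  have := Real.rpow_pos_of_pos (zero_lt_one.trans ht) ((1 - c) / a)
  have := Real.rpow_pos_of_pos hbase (c - b - 1)
  positivity

theorem bddAbove_etaElem_image_Iic (hbc : b + 1 ≤ c) (T : ℝ) :
    BddAbove (etaElem a b c '' Iic T) := by
  set F : ℝ → ℝ := fun t =>
    1 / (a * Real.Gamma (c - b)) * t ^ ((1 - c) / a) * (t ^ (1 / a) - 1) ^ (c - b - 1)
  have hF : ContinuousOn F (Icc 1 T) :=
    (continuousOn_const.mul (continuousOn_id.rpow_const fun t ht =>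
      Or.inl (zero_lt_one.trans_le ht.1).ne')).mul
    (((continuousOn_id.rpow_const fun t ht => Or.inl (zero_lt_one.trans_le ht.1).ne').sub
      continuousOn_const).rpow_const fun _ _ => Or.inr (by linarith))
  refine ((isCompact_Icc.bddAbove_image hF).insert 0).mono ?_
  rintro _ ⟨t, ht, rfl⟩
  by_cases h1 : 1 < t
  · exact Or.inr ⟨t, ⟨h1.le, ht⟩, (if_pos h1).symm⟩
  · exact Or.inl (if_neg h1)

theorem isPositiveBeyondOne_etaElem (ha : 0 < a) (hbc : b + 1 ≤ c) :
    IsPositiveBeyondOne (etaElem a b c) where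
  measurable := Measurable.ite (measurableSet_lt measurable_const measurable_id)
    (by fun_prop) measurable_const
  eq_zero_of_le_one _ := etaElem_eq_zero_of_le_one
  pos_of_one_lt _ := etaElem_pos_of_one_lt ha (by linarith)
  bddAbove_image_Iic := bddAbove_etaElem_image_Iic hbc

end Eta

section MellinConv

variable {g₁ g₂ : ℝ → ℝ}

theorem measurable_mellinConv_s9 (h₁ : Measurable g₁) (h₂ : Measurable g₂) :
    Measurable (mellinConv g₁ g₂) := by
  have hK : StronglyMeasurable (Function.uncurry fun t τ : ℝ => g₁ (t / τ) * g₂ τ / τ) :=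
    (((h₁.comp (measurable_fst.div measurable_snd)).mul (h₂.comp measurable_snd)).div
      measurable_snd).stronglyMeasurable
  exact hK.integral_prod_right.measurable

theorem mellinConv_eq_setIntegral_Ioo (h₁ : ∀ t ≤ 1, g₁ t = 0) (h₂ : ∀ t ≤ 1, g₂ t = 0)
    (t : ℝ) : mellinConv g₁ g₂ t = ∫ τ in Ioo 1 t, g₁ (t / τ) * g₂ τ / τ := by
  refine setIntegral_eq_of_subset_of_forall_sdiff_eq_zero measurableSet_Ioi
    (fun τ hτ => zero_lt_one.trans hτ.1) fun τ ⟨hτ0, hτ⟩ => ?_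
  rcases le_or_gt τ 1 with h1 | h1
  · simp [h₂ τ h1]
  · have htτ : t / τ ≤ 1 := (div_le_one hτ0).2 (not_lt.1 fun h => hτ ⟨h1, h⟩)
    simp [h₁ _ htτ]

theorem mellinConv_eq_zero_of_le_one (h₁ : ∀ t ≤ 1, g₁ t = 0) (h₂ : ∀ t ≤ 1, g₂ t = 0)
    {t : ℝ} (ht : t ≤ 1) : mellinConv g₁ g₂ t = 0 := by
  rw [mellinConv_eq_setIntegral_Ioo h₁ h₂, Ioo_eq_empty (not_lt.2 ht), Measure.restrict_empty,
    integral_zero_measure]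

theorem norm_mellinConv_integrand_le (h₁ : 0 ≤ g₁) (h₂ : 0 ≤ g₂)
    {t T M₁ M₂ : ℝ} (htT : t ≤ T) (hM₁ : M₁ ∈ upperBounds (g₁ '' Iic T))
    (hM₂ : M₂ ∈ upperBounds (g₂ '' Iic T)) {τ : ℝ} (hτ : τ ∈ Ioo 1 t) :
    ‖g₁ (t / τ) * g₂ τ / τ‖ ≤ M₁ * M₂ := by
  have hτ0 : 0 < τ := zero_lt_one.trans hτ.1
  have hg₁ : g₁ (t / τ) ≤ M₁ :=
    hM₁ (mem_image_of_mem _ ((div_le_self (by linarith [hτ.1, hτ.2]) hτ.1.le).trans htT))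
  have hg₂ : g₂ τ ≤ M₂ := hM₂ (mem_image_of_mem _ (hτ.2.le.trans htT))
  have hprod : 0 ≤ g₁ (t / τ) * g₂ τ := mul_nonneg (h₁ _) (h₂ _)
  rw [Real.norm_of_nonneg (div_nonneg hprod hτ0.le)]
  calc g₁ (t / τ) * g₂ τ / τ ≤ g₁ (t / τ) * g₂ τ := div_le_self hprod hτ.1.le
    _ ≤ M₁ * M₂ := mul_le_mul hg₁ hg₂ (h₂ τ) ((h₁ _).trans hg₁)

theorem IsPositiveBeyondOne.integrableOn_mellinConv_integrand (h₁ : IsPositiveBeyondOne g₁)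
    (h₂ : IsPositiveBeyondOne g₂) (t : ℝ) :
    IntegrableOn (fun τ => g₁ (t / τ) * g₂ τ / τ) (Ioo 1 t) := by
  obtain ⟨M₁, hM₁⟩ := h₁.bddAbove_image_Iic t
  obtain ⟨M₂, hM₂⟩ := h₂.bddAbove_image_Iic t
  refine Measure.integrableOn_of_bounded (M := M₁ * M₂) measure_Ioo_lt_top.ne ?_ ?_
  · exact (((h₁.measurable.comp (measurable_const.div measurable_id)).mul h₂.measurable).div
      measurable_id).aestronglyMeasurable
  · exact ae_restrict_of_forall_mem measurableSet_Ioo fun τ hτ =>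
      norm_mellinConv_integrand_le h₁.nonneg h₂.nonneg le_rfl hM₁ hM₂ hτ

theorem IsPositiveBeyondOne.mellinConv_pos (h₁ : IsPositiveBeyondOne g₁)
    (h₂ : IsPositiveBeyondOne g₂) {t : ℝ} (ht : 1 < t) : 0 < mellinConv g₁ g₂ t := by
  have hpos : ∀ τ ∈ Ioo 1 t, 0 < g₁ (t / τ) * g₂ τ / τ := fun τ hτ => by
    have hτ0 : 0 < τ := zero_lt_one.trans hτ.1
    exact div_pos (mul_pos (h₁.pos_of_one_lt _ ((one_lt_div hτ0).2 hτ.2))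
      (h₂.pos_of_one_lt τ hτ.1)) hτ0
  have hsupp : Function.support (fun τ => g₁ (t / τ) * g₂ τ / τ) ∩ Ioo 1 t = Ioo 1 t :=
    inter_eq_right.2 fun τ hτ => (hpos τ hτ).ne'
  rw [mellinConv_eq_setIntegral_Ioo h₁.eq_zero_of_le_one h₂.eq_zero_of_le_one,
    setIntegral_pos_iff_support_of_nonneg_ae
      (ae_restrict_of_forall_mem measurableSet_Ioo fun τ hτ => (hpos τ hτ).le)
      (h₁.integrableOn_mellinConv_integrand h₂ t),
    hsupp, Real.volume_Ioo]
  exact ENNReal.ofReal_pos.2 (sub_pos.2 ht)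

theorem IsPositiveBeyondOne.bddAbove_mellinConv_image_Iic (h₁ : IsPositiveBeyondOne g₁)
    (h₂ : IsPositiveBeyondOne g₂) (T : ℝ) :
    BddAbove (mellinConv g₁ g₂ '' Iic T) := by
  obtain ⟨M₁, hM₁⟩ := h₁.bddAbove_image_Iic T
  obtain ⟨M₂, hM₂⟩ := h₂.bddAbove_image_Iic T
  have hM : 0 ≤ M₁ * M₂ :=
    mul_nonneg ((h₁.nonneg T).trans (hM₁ (mem_image_of_mem _ (le_refl T))))
      ((h₂.nonneg T).trans (hM₂ (mem_image_of_mem _ (le_refl T))))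
  refine ⟨M₁ * M₂ * volume.real (Ioo 1 T), ?_⟩
  rintro _ ⟨t, ht, rfl⟩
  rw [mellinConv_eq_setIntegral_Ioo h₁.eq_zero_of_le_one h₂.eq_zero_of_le_one]
  calc _ ≤ ‖∫ τ in Ioo 1 t, g₁ (t / τ) * g₂ τ / τ‖ := Real.le_norm_self _
    _ ≤ M₁ * M₂ * volume.real (Ioo 1 t) :=
      norm_setIntegral_le_of_norm_le_const measure_Ioo_lt_top fun τ hτ =>
        norm_mellinConv_integrand_le h₁.nonneg h₂.nonneg ht hM₁ hM₂ hτ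
    _ ≤ M₁ * M₂ * volume.real (Ioo 1 T) :=
      mul_le_mul_of_nonneg_left
        (measureReal_mono (Ioo_subset_Ioo_right ht) measure_Ioo_lt_top.ne) hM

theorem IsPositiveBeyondOne.mellinConv (h₁ : IsPositiveBeyondOne g₁)
    (h₂ : IsPositiveBeyondOne g₂) : IsPositiveBeyondOne (mellinConv g₁ g₂) where
  measurable := measurable_mellinConv_s9 h₁.measurable h₂.measurable
  eq_zero_of_le_one _ := mellinConv_eq_zero_of_le_one h₁.eq_zero_of_le_one h₂.eq_zero_of_le_one
  pos_of_one_lt _ := h₁.mellinConv_pos h₂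
  bddAbove_image_Iic := h₁.bddAbove_mellinConv_image_Iic h₂

end MellinConv

theorem isPositiveBeyondOne_foldl_mellinConv {g : ℝ → ℝ} (hg : IsPositiveBeyondOne g)
    {gs : List (ℝ → ℝ)} (hgs : ∀ h ∈ gs, IsPositiveBeyondOne h) :
    IsPositiveBeyondOne (gs.foldl mellinConv g) := by
  induction gs generalizing g with
  | nil => exact hg
  | cons h gs ih =>
    rw [List.forall_mem_cons] at hgs
    exact ih (hg.mellinConv hgs.1) hgs.2

theorem isPositiveBeyondOne_mellinConvList {gs : List (ℝ → ℝ)} (hne : gs ≠ [])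
    (hgs : ∀ g ∈ gs, IsPositiveBeyondOne g) : IsPositiveBeyondOne (mellinConvList gs) := by
  obtain ⟨g, gs, rfl⟩ := List.exists_cons_of_ne_nil hne
  rw [List.forall_mem_cons] at hgs
  exact isPositiveBeyondOne_foldl_mellinConv hgs.1 hgs.2

theorem stmt_9_general (n₄ : ℕ) (hn₄ : 1 ≤ n₄)
    (a''' v w : Fin n₄ → ℝ)
    (ha''' : ∀ j, 0 < a''' j) (hw : ∀ j, v j + 1 ≤ w j)
    (f : ℝ → ℝ)
    (hf : f = mellinConvList (List.ofFn fun j => etaElem (a''' j) (v j) (w j))) :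
    (∀ t : ℝ, 0 < t → t ≤ 1 → f t = 0) ∧ (∀ t : ℝ, 1 < t → 0 < f t) := by
  have hne : List.ofFn (fun j => etaElem (a''' j) (v j) (w j)) ≠ [] := by
    rw [Ne, List.ofFn_eq_nil_iff]
    omega
  have hpos : IsPositiveBeyondOne f := by
    rw [hf]
    refine isPositiveBeyondOne_mellinConvList hne fun g hg => ?_
    obtain ⟨j, rfl⟩ := List.mem_ofFn.1 hg
    exact isPositiveBeyondOne_etaElem (ha''' j) (hw j)
  exact ⟨fun t _ ht => hpos.eq_zero_of_le_one t ht, hpos.pos_of_one_lt⟩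

theorem stmt_9 (n₄ : ℕ) (hn₄ : 1 ≤ n₄)
    (a''' v w : Fin n₄ → ℝ)
    (ha''' : ∀ j, 0 < a''' j) (hv : ∀ j, 0 < v j) (hw : ∀ j, v j + 1 ≤ w j)
    (f : ℝ → ℝ)
    (hf : f = mellinConvList (List.ofFn fun j => etaElem (a''' j) (v j) (w j))) :
    (∀ t : ℝ, 0 < t → t ≤ 1 → f t = 0) ∧ (∀ t : ℝ, 1 < t → 0 < f t) :=
  stmt_9_general n₄ hn₄ a''' v w ha''' hw f hf
end

section
/- For every a > 0, c > 0, b ≥ 0 and every real x₀ with −b/a ≤ x₀ < c/a, the function t ↦ t^{x₀}·ψ_{a,b,c}(t) is uniformly continuous and bounded on (0,∞). -/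
open Set Filter Real Topology

section OneAddRpow

variable {a p q t : ℝ}

lemma rpow_le_one_add_rpow_inv_rpow_mul (ha : 0 < a) (hp : 0 ≤ p) (ht : 0 ≤ t) :
    t ^ p ≤ (1 + t ^ (1 / a)) ^ (a * p) := by
  have ht' : 0 ≤ t ^ (1 / a) := rpow_nonneg ht _
  calc t ^ p = (t ^ (1 / a)) ^ (a * p) := by
        rw [← rpow_mul ht, one_div, inv_mul_cancel_left₀ ha.ne']
    _ ≤ (1 + t ^ (1 / a)) ^ (a * p) :=
        rpow_le_rpow ht' (by linarith) (mul_nonneg ha.le hp)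

lemma rpow_mul_one_add_rpow_inv_rpow_le (ha : 0 < a) (hp : 0 ≤ p) (ht : 0 ≤ t) :
    t ^ p * (1 + t ^ (1 / a)) ^ q ≤ (1 + t ^ (1 / a)) ^ (a * p + q) := by
  have hpos : 0 < 1 + t ^ (1 / a) := by positivity
  rw [rpow_add hpos]
  exact mul_le_mul_of_nonneg_right (rpow_le_one_add_rpow_inv_rpow_mul ha hp ht)
    (rpow_nonneg hpos.le _)

lemma abs_rpow_mul_one_add_rpow_inv_rpow_le_one (ha : 0 < a) (hp : 0 ≤ p) (hpq : a * p + q ≤ 0)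
    (ht : 0 ≤ t) : |t ^ p * (1 + t ^ (1 / a)) ^ q| ≤ 1 := by
  rw [abs_of_nonneg (by positivity)]
  refine (rpow_mul_one_add_rpow_inv_rpow_le ha hp ht).trans ?_
  exact rpow_le_one_of_one_le_of_nonpos (by linarith [rpow_nonneg ht (1 / a)]) hpq

lemma tendsto_rpow_mul_one_add_rpow_inv_rpow_atTop (ha : 0 < a) (hp : 0 ≤ p)
    (hpq : a * p + q < 0) :
    Tendsto (fun t : ℝ => t ^ p * (1 + t ^ (1 / a)) ^ q) atTop (𝓝 0) := by
  have hbase : Tendsto (fun t : ℝ => 1 + t ^ (1 / a)) atTop atTop :=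
    tendsto_atTop_add_const_left _ 1 (tendsto_rpow_atTop (by positivity))
  have hdom : Tendsto (fun t : ℝ => (1 + t ^ (1 / a)) ^ (a * p + q)) atTop (𝓝 0) := by
    have := tendsto_rpow_neg_atTop (y := -(a * p + q)) (by linarith)
    rw [neg_neg] at this
    exact this.comp hbase
  refine tendsto_of_tendsto_of_tendsto_of_le_of_le' tendsto_const_nhds hdom ?_ ?_
  · filter_upwards [eventually_ge_atTop 0] with t ht using by positivity
  · filter_upwards [eventually_ge_atTop 0] with t ht
      using rpow_mul_one_add_rpow_inv_rpow_le ha hp ht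

lemma continuous_abs_rpow_mul_one_add_abs_rpow_inv_rpow (ha : 0 ≤ a) (hp : 0 ≤ p) :
    Continuous fun t : ℝ => |t| ^ p * (1 + |t| ^ (1 / a)) ^ q := by
  have hinv : 0 ≤ 1 / a := one_div_nonneg.mpr ha
  refine (continuous_abs.rpow_const fun _ => Or.inr hp).mul
    ((continuous_const.add (continuous_abs.rpow_const fun _ => Or.inr hinv)).rpow_const
      fun t => Or.inl ?_)
  change 1 + |t| ^ (1 / a) ≠ 0
  positivity

lemma uniformContinuous_abs_rpow_mul_one_add_abs_rpow_inv_rpow (ha : 0 < a) (hp : 0 ≤ p)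
    (hpq : a * p + q < 0) :
    UniformContinuous fun t : ℝ => |t| ^ p * (1 + |t| ^ (1 / a)) ^ q :=
  (continuous_abs_rpow_mul_one_add_abs_rpow_inv_rpow ha.le hp)
    |>.uniformContinuous_of_tendsto_cocompact
      ((tendsto_rpow_mul_one_add_rpow_inv_rpow_atTop ha hp hpq).comp tendsto_norm_cocompact_atTop)

end OneAddRpow

lemma rpow_mul_psiElem_eq (a b c : ℝ) {x₀ t : ℝ} (ht : 0 < t) :
    t ^ x₀ * psiElem a b c t
      = Gamma (b + c) / a * (|t| ^ (x₀ + b / a) * (1 + |t| ^ (1 / a)) ^ (-b - c)) := by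
  rw [abs_of_pos ht, rpow_add ht, psiElem]
  ring

theorem stmt_16_general (a b c : ℝ) (ha : 0 < a)
    (x₀ : ℝ) (hx₀ : -(b / a) ≤ x₀) (hx₀' : x₀ < c / a) :
    UniformContinuousOn (fun t : ℝ => t ^ x₀ * psiElem a b c t) (Set.Ioi (0 : ℝ)) ∧
    ∃ C : ℝ, ∀ t ∈ Set.Ioi (0 : ℝ), |t ^ x₀ * psiElem a b c t| ≤ C := by
  have hp : 0 ≤ x₀ + b / a := by linarith
  have hpq : a * (x₀ + b / a) + (-b - c) < 0 := by
    rw [mul_add, mul_div_cancel₀ b ha.ne']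
    linarith [(lt_div_iff₀' ha).mp hx₀']
  refine ⟨?_, |Gamma (b + c) / a|, fun t ht => ?_⟩
  · exact (((uniformContinuous_abs_rpow_mul_one_add_abs_rpow_inv_rpow ha hp hpq).const_mul'
      _).uniformContinuousOn).congr
      fun t ht => (rpow_mul_psiElem_eq a b c ht).symm
  · rw [rpow_mul_psiElem_eq a b c ht, abs_mul]
    exact mul_le_of_le_one_right (abs_nonneg _)
      (abs_rpow_mul_one_add_rpow_inv_rpow_le_one ha hp hpq.le (abs_nonneg t))

theorem stmt_16 (a b c : ℝ) (ha : 0 < a) (hc : 0 < c) (hb : 0 ≤ b)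
    (x₀ : ℝ) (hx₀ : -(b / a) ≤ x₀) (hx₀' : x₀ < c / a) :
    UniformContinuousOn (fun t : ℝ => t ^ x₀ * psiElem a b c t) (Set.Ioi (0 : ℝ)) ∧
    ∃ C : ℝ, ∀ t ∈ Set.Ioi (0 : ℝ), |t ^ x₀ * psiElem a b c t| ≤ C :=
  stmt_16_general a b c ha x₀ hx₀ hx₀'
end

section
/- Let p ≥ 1 and let a_j > 0, v_j > 0, w_j ≥ v_j + 1 for j = 1,…,p. Then for every t > 0 the series Σ_{ℓ=0}^∞ [Π_{j=1}^{p} Γ(v_j + a_j·ℓ)/Γ(w_j + a_j·ℓ)] · (−t)^ℓ/ℓ! converges absolutely and its sum is strictly positive. (This sum is the Wright generalized hypergeometric function ₚW_p[−t] with upper parameter pairs (v_j, a_j) and lower parameter pairs (w_j, a_j).) -/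
/-!
For `0 < c < d` the Beta integral gives
`Γ(c + aℓ) / Γ(d + aℓ) = Γ(d - c)⁻¹ ∫₀¹ x^(c + aℓ - 1) (1 - x)^(d - c - 1) dx`, so multiplying the
coefficients `b ℓ` of an exponential generating function `G(z) = ∑ b ℓ z^ℓ / ℓ!` by this ratio
turns `G` into `Γ(d - c)⁻¹ ∫₀¹ x^(c - 1) (1 - x)^(d - c - 1) G(z x^a) dx` (the sum and the integral
commute because `|b ℓ|` is bounded: every ratio lies in `(0, Γ(c) / Γ(d)]`). This operation
preserves positivity on all of `ℝ`. Starting from `exp z > 0` and inserting the `p` Gamma ratios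
one at a time shows that the Wright function is positive at every real argument, in particular
at `-t`.
-/

open Real MeasureTheory Set

noncomputable def egf (b : ℕ → ℝ) (z : ℝ) : ℝ :=
  ∑' ℓ : ℕ, b ℓ * z ^ ℓ / ℓ.factorial

section egf

variable {b : ℕ → ℝ} {B : ℝ}

lemma norm_egf_term_le (hb : ∀ ℓ, |b ℓ| ≤ B) {z T : ℝ} (hz : |z| ≤ T) (ℓ : ℕ) :
    ‖b ℓ * z ^ ℓ / ℓ.factorial‖ ≤ B * (T ^ ℓ / ℓ.factorial) := by
  have hB : 0 ≤ B := (abs_nonneg _).trans (hb 0)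
  rw [Real.norm_eq_abs, abs_div, abs_mul, abs_pow, Nat.abs_cast, mul_div_assoc]
  gcongr
  exact hb ℓ

lemma summable_norm_egf_term (hb : ∀ ℓ, |b ℓ| ≤ B) (z : ℝ) :
    Summable fun ℓ : ℕ => ‖b ℓ * z ^ ℓ / ℓ.factorial‖ :=
  ((Real.summable_pow_div_factorial |z|).mul_left B).of_nonneg_of_le (fun _ => norm_nonneg _)
    (norm_egf_term_le hb le_rfl)

lemma abs_egf_le (hb : ∀ ℓ, |b ℓ| ≤ B) {z T : ℝ} (hz : |z| ≤ T) : |egf b z| ≤ B * exp T :=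
  calc |egf b z| ≤ ∑' ℓ : ℕ, ‖b ℓ * z ^ ℓ / ℓ.factorial‖ :=
        norm_tsum_le_tsum_norm (summable_norm_egf_term hb z)
    _ ≤ ∑' ℓ : ℕ, B * (T ^ ℓ / ℓ.factorial) :=
        (summable_norm_egf_term hb z).tsum_le_tsum (norm_egf_term_le hb hz)
          ((Real.summable_pow_div_factorial _).mul_left B)
    _ = B * exp T := by
        rw [tsum_mul_left, Real.exp_eq_exp_ℝ, NormedSpace.exp_eq_tsum_div]

lemma continuous_egf (hb : ∀ ℓ, |b ℓ| ≤ B) : Continuous (egf b) := by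
  refine continuous_iff_continuousAt.2 fun y => ?_
  have hT : ContinuousOn (egf b) (Icc (-(|y| + 1)) (|y| + 1)) :=
    continuousOn_tsum (fun ℓ => by fun_prop)
      ((Real.summable_pow_div_factorial (|y| + 1)).mul_left B)
      fun ℓ z hz => norm_egf_term_le hb (abs_le.2 hz) ℓ
  exact hT.continuousAt (Icc_mem_nhds (by linarith [neg_abs_le y]) (by linarith [le_abs_self y]))

lemma egf_one (z : ℝ) : egf (fun _ => 1) z = exp z := by
  simp [egf, Real.exp_eq_exp_ℝ, NormedSpace.exp_eq_tsum_div]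

end egf

lemma ofReal_rpow_mul_one_sub_rpow {x : ℝ} (hx : x ∈ Icc (0 : ℝ) 1) (c s : ℝ) :
    (x : ℂ) ^ ((c : ℂ) - 1) * (1 - (x : ℂ)) ^ ((s : ℂ) - 1) =
      ((x ^ (c - 1) * (1 - x) ^ (s - 1) : ℝ) : ℂ) := by
  rw [Complex.ofReal_mul, Complex.ofReal_cpow hx.1, Complex.ofReal_cpow (sub_nonneg.2 hx.2)]
  push_cast
  rfl

lemma integrableOn_rpow_mul_one_sub_rpow {c s : ℝ} (hc : 0 < c) (hs : 0 < s) :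
    IntegrableOn (fun x : ℝ => x ^ (c - 1) * (1 - x) ^ (s - 1)) (Ioc 0 1) := by
  have h := Complex.betaIntegral_convergent (u := c) (v := s) (by simpa) (by simpa)
  rw [intervalIntegrable_iff_integrableOn_Ioc_of_le zero_le_one] at h
  refine IntegrableOn.congr_fun (Integrable.re h) (fun x hx => ?_) measurableSet_Ioc
  rw [RCLike.re_to_complex, ofReal_rpow_mul_one_sub_rpow (Ioc_subset_Icc_self hx),
    Complex.ofReal_re]

lemma Gamma_div_Gamma_eq_integral {c d : ℝ} (hc : 0 < c) (hcd : c < d) :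
    Gamma c / Gamma d =
      (Gamma (d - c))⁻¹ * ∫ x in Ioc (0 : ℝ) 1, x ^ (c - 1) * (1 - x) ^ (d - c - 1) := by
  have hdc : 0 < d - c := sub_pos.2 hcd
  have hbeta : Complex.betaIntegral c ↑(d - c) =
      ↑(∫ x in Ioc (0 : ℝ) 1, x ^ (c - 1) * (1 - x) ^ (d - c - 1)) := by
    rw [Complex.betaIntegral, ← intervalIntegral.integral_of_le zero_le_one,
      ← intervalIntegral.integral_ofReal]
    refine intervalIntegral.integral_congr fun x hx => ?_
    rw [uIcc_of_le zero_le_one] at hx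
    exact ofReal_rpow_mul_one_sub_rpow hx c (d - c)
  have h := Complex.Gamma_mul_Gamma_eq_betaIntegral (s := c) (t := ↑(d - c)) (by simpa)
    (by simpa)
  rw [hbeta, ← Complex.ofReal_add, add_sub_cancel, Complex.Gamma_ofReal, Complex.Gamma_ofReal,
    Complex.Gamma_ofReal, ← Complex.ofReal_mul, ← Complex.ofReal_mul] at h
  have h' := Complex.ofReal_injective h
  have := (Gamma_pos_of_pos hdc).ne'
  have := (Gamma_pos_of_pos (hc.trans hcd)).ne'
  field_simp
  linarith

lemma Gamma_add_div_Gamma_add_le {c d y : ℝ} (hc : 0 < c) (hcd : c < d) (hy : 0 ≤ y) :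
    Gamma (c + y) / Gamma (d + y) ≤ Gamma c / Gamma d := by
  rw [Gamma_div_Gamma_eq_integral (by linarith) (by linarith), Gamma_div_Gamma_eq_integral hc hcd,
    show d + y - (c + y) = d - c by ring]
  have hdc : 0 < d - c := sub_pos.2 hcd
  refine mul_le_mul_of_nonneg_left ?_ (inv_pos.2 (Gamma_pos_of_pos hdc)).le
  refine setIntegral_mono_on (integrableOn_rpow_mul_one_sub_rpow (by linarith) hdc)
    (integrableOn_rpow_mul_one_sub_rpow hc hdc) measurableSet_Ioc fun x hx => ?_
  exact mul_le_mul_of_nonneg_right (rpow_le_rpow_of_exponent_ge hx.1 hx.2 (by linarith))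
    (rpow_nonneg (sub_nonneg.2 hx.2) _)

lemma Gamma_add_div_Gamma_add_pos {c d y : ℝ} (hc : 0 < c) (hcd : c < d) (hy : 0 ≤ y) :
    0 < Gamma (c + y) / Gamma (d + y) :=
  div_pos (Gamma_pos_of_pos (by linarith)) (Gamma_pos_of_pos (by linarith))

lemma abs_prod_Gamma_add_div_Gamma_add_le {ι : Type*} (S : Finset ι) {a c d : ι → ℝ}
    (ha : ∀ j, 0 ≤ a j) (hc : ∀ j, 0 < c j) (hcd : ∀ j, c j < d j) {y : ℝ} (hy : 0 ≤ y) :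
    |∏ j ∈ S, Gamma (c j + a j * y) / Gamma (d j + a j * y)| ≤
      ∏ j ∈ S, Gamma (c j) / Gamma (d j) := by
  have hay : ∀ j, 0 ≤ a j * y := fun j => mul_nonneg (ha j) hy
  rw [abs_of_pos (Finset.prod_pos fun j _ => Gamma_add_div_Gamma_add_pos (hc j) (hcd j) (hay j))]
  exact Finset.prod_le_prod (fun j _ => (Gamma_add_div_Gamma_add_pos (hc j) (hcd j) (hay j)).le)
    fun j _ => Gamma_add_div_Gamma_add_le (hc j) (hcd j) (hay j)

lemma integrableOn_rpow_mul_one_sub_rpow_mul {c s M : ℝ} (hc : 0 < c) (hs : 0 < s) {g : ℝ → ℝ}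
    (hg : Continuous g) (hM : ∀ x ∈ Ioc (0 : ℝ) 1, |g x| ≤ M) :
    IntegrableOn (fun x : ℝ => x ^ (c - 1) * (1 - x) ^ (s - 1) * g x) (Ioc 0 1) :=
  (integrableOn_rpow_mul_one_sub_rpow hc hs).mul_bdd hg.aestronglyMeasurable
    ((ae_restrict_iff' measurableSet_Ioc).2 (Filter.Eventually.of_forall hM))

lemma abs_mul_rpow_le {x a : ℝ} (hx₀ : 0 ≤ x) (hx₁ : x ≤ 1) (ha : 0 ≤ a) (z : ℝ) :
    |z * x ^ a| ≤ |z| := by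
  rw [abs_mul, abs_of_nonneg (rpow_nonneg hx₀ a)]
  exact mul_le_of_le_one_right (abs_nonneg z) (rpow_le_one hx₀ hx₁ ha)

theorem egf_Gamma_div_mul_eq_integral {b : ℕ → ℝ} {B : ℝ} (hb : ∀ ℓ, |b ℓ| ≤ B) {a c d : ℝ}
    (ha : 0 ≤ a) (hc : 0 < c) (hcd : c < d) (z : ℝ) :
    egf (fun ℓ => Gamma (c + a * ℓ) / Gamma (d + a * ℓ) * b ℓ) z =
      (Gamma (d - c))⁻¹ *
        ∫ x in Ioc (0 : ℝ) 1, x ^ (c - 1) * (1 - x) ^ (d - c - 1) * egf b (z * x ^ a) := by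
  have hdc : 0 < d - c := sub_pos.2 hcd
  set F : ℕ → ℝ → ℝ := fun ℓ x =>
    x ^ (c - 1) * (1 - x) ^ (d - c - 1) * (b ℓ * (z * x ^ a) ^ ℓ / ℓ.factorial) with hF
  have hza : ∀ x ∈ Ioc (0 : ℝ) 1, |z * x ^ a| ≤ |z| := fun x hx =>
    abs_mul_rpow_le hx.1.le hx.2 ha z
  have hF_int : ∀ ℓ, IntegrableOn (F ℓ) (Ioc 0 1) := fun ℓ =>
    integrableOn_rpow_mul_one_sub_rpow_mul hc hdc
      (by have := continuous_rpow_const ha; fun_prop) fun x hx => norm_egf_term_le hb (hza x hx) ℓ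
  have hF_sum : Summable fun ℓ => ∫ x in Ioc (0 : ℝ) 1, ‖F ℓ x‖ := by
    refine (((summable_pow_div_factorial |z|).mul_left B).mul_left
      (∫ x in Ioc (0 : ℝ) 1, x ^ (c - 1) * (1 - x) ^ (d - c - 1))).of_nonneg_of_le
      (fun ℓ => setIntegral_nonneg measurableSet_Ioc fun _ _ => norm_nonneg _) fun ℓ => ?_
    rw [← integral_mul_const]
    refine setIntegral_mono_on (hF_int ℓ).norm
      ((integrableOn_rpow_mul_one_sub_rpow hc hdc).mul_const _) measurableSet_Ioc fun x hx => ?_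
    have hβ : 0 ≤ x ^ (c - 1) * (1 - x) ^ (d - c - 1) :=
      mul_nonneg (rpow_nonneg hx.1.le _) (rpow_nonneg (sub_nonneg.2 hx.2) _)
    rw [norm_mul, Real.norm_of_nonneg hβ]
    exact mul_le_mul_of_nonneg_left (norm_egf_term_le hb (hza x hx) ℓ) hβ
  have hterm : ∀ ℓ : ℕ, Gamma (c + a * ℓ) / Gamma (d + a * ℓ) * b ℓ * z ^ ℓ / ℓ.factorial =
      (Gamma (d - c))⁻¹ * ∫ x in Ioc (0 : ℝ) 1, F ℓ x := by
    intro ℓ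
    have hcℓ : 0 < c + a * ℓ := by positivity
    have hFℓ : ∫ x in Ioc (0 : ℝ) 1, F ℓ x =
        (∫ x in Ioc (0 : ℝ) 1, x ^ (c + a * ℓ - 1) * (1 - x) ^ (d - c - 1)) *
          (b ℓ * z ^ ℓ / ℓ.factorial) := by
      rw [← integral_mul_const]
      refine setIntegral_congr_fun measurableSet_Ioc fun x hx => ?_
      rw [show c + a * ℓ - 1 = (c - 1) + a * ℓ by ring, rpow_add hx.1, rpow_mul_natCast hx.1.le]
      simp only [hF]
      ring
    rw [Gamma_div_Gamma_eq_integral hcℓ (by linarith), show d + a * ℓ - (c + a * ℓ) = d - c by ring,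
      hFℓ]
    ring
  calc egf _ z = ∑' ℓ : ℕ, (Gamma (d - c))⁻¹ * ∫ x in Ioc (0 : ℝ) 1, F ℓ x := tsum_congr hterm
    _ = (Gamma (d - c))⁻¹ * ∫ x in Ioc (0 : ℝ) 1, ∑' ℓ : ℕ, F ℓ x := by
      rw [tsum_mul_left, integral_tsum_of_summable_integral_norm hF_int hF_sum]
    _ = _ := by simp only [hF, tsum_mul_left]; rfl

theorem egf_Gamma_div_mul_pos {b : ℕ → ℝ} {B : ℝ} (hb : ∀ ℓ, |b ℓ| ≤ B)
    (hpos : ∀ y, 0 < egf b y) {a c d : ℝ} (ha : 0 ≤ a) (hc : 0 < c) (hcd : c < d) (z : ℝ) :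
    0 < egf (fun ℓ => Gamma (c + a * ℓ) / Gamma (d + a * ℓ) * b ℓ) z := by
  have hdc : 0 < d - c := sub_pos.2 hcd
  rw [egf_Gamma_div_mul_eq_integral hb ha hc hcd, ← intervalIntegral.integral_of_le zero_le_one]
  refine mul_pos (inv_pos.2 (Gamma_pos_of_pos hdc))
    (intervalIntegral.intervalIntegral_pos_of_pos_on ?_ (fun x hx => ?_) zero_lt_one)
  · rw [intervalIntegrable_iff_integrableOn_Ioc_of_le zero_le_one]
    exact integrableOn_rpow_mul_one_sub_rpow_mul hc hdc
      (by have := continuous_rpow_const ha; have := continuous_egf hb; fun_prop)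
      fun x hx => abs_egf_le hb (abs_mul_rpow_le hx.1.le hx.2 ha z)
  · have := rpow_pos_of_pos hx.1 (c - 1)
    have := rpow_pos_of_pos (sub_pos.2 hx.2) (d - c - 1)
    have := hpos (z * x ^ a)
    positivity

theorem egf_prod_Gamma_add_div_Gamma_add_pos {ι : Type*} (S : Finset ι) {a c d : ι → ℝ}
    (ha : ∀ j, 0 ≤ a j) (hc : ∀ j, 0 < c j) (hcd : ∀ j, c j < d j) (z : ℝ) :
    0 < egf (fun ℓ => ∏ j ∈ S, Gamma (c j + a j * ℓ) / Gamma (d j + a j * ℓ)) z := by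
  classical
  induction S using Finset.induction_on generalizing z with
  | empty => simpa only [Finset.prod_empty, egf_one] using exp_pos z
  | insert j S hj ih =>
    simp only [Finset.prod_insert hj]
    exact egf_Gamma_div_mul_pos
      (fun ℓ => abs_prod_Gamma_add_div_Gamma_add_le S ha hc hcd (Nat.cast_nonneg ℓ)) ih
      (ha j) (hc j) (hcd j) z

theorem stmt_18_general (p : ℕ) (a v w : Fin p → ℝ)
    (ha : ∀ j, 0 < a j) (hv : ∀ j, 0 < v j) (hw : ∀ j, v j + 1 ≤ w j)
    (t : ℝ) :
    Summable (fun ℓ : ℕ =>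
      |(∏ j, Real.Gamma (v j + a j * ℓ) / Real.Gamma (w j + a j * ℓ)) *
        (-t) ^ ℓ / (Nat.factorial ℓ)|) ∧
    0 < ∑' ℓ : ℕ,
      (∏ j, Real.Gamma (v j + a j * ℓ) / Real.Gamma (w j + a j * ℓ)) *
        (-t) ^ ℓ / (Nat.factorial ℓ) := by
  have ha₀ : ∀ j, 0 ≤ a j := fun j => (ha j).le
  have hvw : ∀ j, v j < w j := fun j => by linarith [hw j]
  have hb : ∀ ℓ : ℕ, |∏ j, Gamma (v j + a j * ℓ) / Gamma (w j + a j * ℓ)| ≤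
      ∏ j, Gamma (v j) / Gamma (w j) := fun ℓ =>
    abs_prod_Gamma_add_div_Gamma_add_le Finset.univ ha₀ hv hvw (Nat.cast_nonneg ℓ)
  exact ⟨summable_norm_egf_term hb (-t),
    egf_prod_Gamma_add_div_Gamma_add_pos Finset.univ ha₀ hv hvw (-t)⟩

theorem stmt_18 (p : ℕ) (hp : 1 ≤ p) (a v w : Fin p → ℝ)
    (ha : ∀ j, 0 < a j) (hv : ∀ j, 0 < v j) (hw : ∀ j, v j + 1 ≤ w j)
    (t : ℝ) (ht : 0 < t) :
    Summable (fun ℓ : ℕ =>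
      |(∏ j, Real.Gamma (v j + a j * ℓ) / Real.Gamma (w j + a j * ℓ)) *
        (-t) ^ ℓ / (Nat.factorial ℓ)|) ∧
    0 < ∑' ℓ : ℕ,
      (∏ j, Real.Gamma (v j + a j * ℓ) / Real.Gamma (w j + a j * ℓ)) *
        (-t) ^ ℓ / (Nat.factorial ℓ) :=
  stmt_18_general p a v w ha hv hw t
end
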